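/- arXiv:1608.00810 — 10 statements merged into one kernel-verified Lean document; each statement's English description precedes it below -/
import Mathlib

section
/- Let A : Finset (Fin n). Assume that for every y : ∀ i, α i, every i ∈ A, and every c : {i // i ∈ A} → Bool, writing z(c,i,y) for the point whose j-th coordinate equals (y* j if c j = true, and y⁰ j if c j = false) for every j ∈ A with j < i, and equals y j otherwise, one has u (z(c,i,y)[i := y* i]) ≠ u (z(c,i,y)[i := y⁰ i]); define the conditional utility r_i(c,y) = (u (z(c,i,y)) − u (z(c,i,y)[i := y⁰ i])) / (u (z(c,i,y)[i := y* i]) − u (z(c,i,y)[i := y⁰ i])). Then for every y: u y = Σ over all c : {i // i ∈ A} → Bool of u (ŷ_c) · ∏_{i ∈ A} g_i(c,y), where ŷ_c is the point agreeing with y outside A and having i-th coordinate y* i if c i = true and y⁰ i if c i = false for i ∈ A, and g_i(c,y) = r_i(c,y) if c i = true and 1 − r_i(c,y) if c i = false. -/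
/-- Conditional-utility expansion of `u` over an arbitrary subset `A`
of the attributes (Abbas' expansion theorem). -/
theorem expected_utility_expansion {n : ℕ} {α : Fin n → Type*} [∀ i, Nonempty (α i)]
    (u : (∀ i, α i) → ℝ) (y0 ystar : ∀ i, α i) (A : Finset (Fin n))
    -- the point `z(c, i, y)`
    (z : ({i // i ∈ A} → Bool) → Fin n → (∀ i, α i) → (∀ i, α i))
    (hz : ∀ c i y j, z c i y j =
      if h : j ∈ A then
        (if j < i then (if c ⟨j, h⟩ then ystar j else y0 j) else y j)
      else y j)
    -- nondegeneracy of the denominators of the conditional utilities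
    (hne : ∀ (y : ∀ i, α i) (i : Fin n), i ∈ A → ∀ c : {i // i ∈ A} → Bool,
      u (Function.update (z c i y) i (ystar i)) ≠ u (Function.update (z c i y) i (y0 i)))
    -- the conditional utility `r_i(c, y)`
    (r : ({i // i ∈ A} → Bool) → Fin n → (∀ i, α i) → ℝ)
    (hr : ∀ c i y, r c i y =
      (u (z c i y) - u (Function.update (z c i y) i (y0 i))) /
        (u (Function.update (z c i y) i (ystar i)) - u (Function.update (z c i y) i (y0 i))))
    -- the corner point `ŷ_c`
    (yhat : ({i // i ∈ A} → Bool) → (∀ i, α i) → (∀ i, α i))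
    (hyhat : ∀ c y j, yhat c y j =
      if h : j ∈ A then (if c ⟨j, h⟩ then ystar j else y0 j) else y j)
    -- the factors `g_i(c, y)`
    (g : ({i // i ∈ A} → Bool) → {i // i ∈ A} → (∀ i, α i) → ℝ)
    (hg : ∀ c (i : {i // i ∈ A}) y,
      g c i y = if c i then r c i.val y else 1 - r c i.val y) :
    ∀ y : ∀ i, α i,
      u y = ∑ c : ({i // i ∈ A} → Bool), u (yhat c y) * ∏ i ∈ A.attach, g c i y := by
  classical
  intro y
  set zt : ℕ → ({i // i ∈ A} → Bool) → (∀ i, α i) := fun t c j =>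
    if h : j ∈ A then (if (j : ℕ) < t then (if c ⟨j, h⟩ then ystar j else y0 j) else y j)
    else y j with hzt
  set w : ℕ → ({i // i ∈ A} → Bool) → ℝ := fun t c =>
    ∏ i ∈ A.attach, (if ((i : Fin n) : ℕ) < t then g c i y else 2⁻¹) with hw
  -- agreement lemma for z
  have zagree : ∀ (c c' : {i // i ∈ A} → Bool) (k : Fin n),
      (∀ (j : Fin n) (h : j ∈ A), j < k → c ⟨j, h⟩ = c' ⟨j, h⟩) → z c k y = z c' k y := by
    intro c c' k hcc
    funext j
    rw [hz, hz]
    by_cases h1 : j ∈ A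
    · rw [dif_pos h1, dif_pos h1]
      by_cases h2 : j < k
      · rw [if_pos h2, if_pos h2, hcc j h1 h2]
      · rw [if_neg h2, if_neg h2]
    · rw [dif_neg h1, dif_neg h1]
  have key : ∀ t : ℕ, ∑ c : ({i // i ∈ A} → Bool), u (zt t c) * w t c = u y := by
    intro t
    induction t with
    | zero =>
      have h1 : ∀ c : ({i // i ∈ A} → Bool), zt 0 c = y := by
        intro c; funext j; simp [hzt]
      have h2 : ∀ c : ({i // i ∈ A} → Bool), w 0 c = (2⁻¹ : ℝ) ^ A.card := by
        intro c
        simp [hw, Finset.prod_const, Finset.card_attach]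
      have hcard : Fintype.card ({i // i ∈ A} → Bool) = 2 ^ A.card := by
        rw [Fintype.card_fun, Fintype.card_bool, Fintype.card_coe]
      calc ∑ c : ({i // i ∈ A} → Bool), u (zt 0 c) * w 0 c
          = ∑ _c : ({i // i ∈ A} → Bool), u y * (2⁻¹ : ℝ) ^ A.card := by
            exact Finset.sum_congr rfl (fun c _ => by rw [h1, h2])
        _ = (2 ^ A.card : ℕ) • (u y * (2⁻¹ : ℝ) ^ A.card) := by
            rw [Finset.sum_const, Finset.card_univ, hcard]
        _ = u y := by
            rw [nsmul_eq_mul]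
            push_cast
            have h3 : (2 : ℝ) ^ A.card * (2⁻¹ : ℝ) ^ A.card = 1 := by
              rw [← mul_pow]; norm_num
            rw [mul_comm (u y), ← mul_assoc, h3, one_mul]
    | succ t ih =>
      rw [← ih]
      by_cases hmem : ∃ hn : t < n, (⟨t, hn⟩ : Fin n) ∈ A
      · obtain ⟨hn, hA⟩ := hmem
        set i : Fin n := ⟨t, hn⟩ with hi
        have hit : (i : ℕ) = t := rfl
        set i₀ : {j // j ∈ A} := ⟨i, hA⟩ with hi₀
        set flip : ({j // j ∈ A} → Bool) → ({j // j ∈ A} → Bool) :=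
          fun c => Function.update c i₀ (!c i₀) with hflipdef
        have hflip_i₀ : ∀ c, flip c i₀ = !c i₀ := by
          intro c; simp [hflipdef]
        have hflip_ne : ∀ c (j : {j // j ∈ A}), j ≠ i₀ → flip c j = c j := by
          intro c j hj; simp [hflipdef, Function.update_of_ne hj]
        have hinv : Function.Involutive flip := by
          intro c
          funext j
          by_cases hj : j = i₀
          · subst hj
            rw [hflip_i₀, hflip_i₀, Bool.not_not]
          · rw [hflip_ne _ _ hj, hflip_ne _ _ hj]
        -- z is flip-invariant at i
        have hz_flip : ∀ c, z (flip c) i y = z c i y := by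
          intro c
          apply zagree
          intro j hjA hji
          apply hflip_ne
          intro hcon
          have hje : j = i := congrArg Subtype.val hcon
          rw [hje] at hji
          exact absurd hji (lt_irrefl i)
        -- zt t as z
        have hzt_z : ∀ c, zt t c = z c i y := by
          intro c
          funext j
          rw [hz]
          simp only [hzt]
          by_cases h1 : j ∈ A
          · rw [dif_pos h1, dif_pos h1]
            have : (j < i) ↔ ((j : ℕ) < t) := by
              rw [Fin.lt_def, hit]
            rw [if_congr this.symm rfl rfl]
          · rw [dif_neg h1, dif_neg h1]
        have hzt_flip : ∀ c, zt t (flip c) = zt t c := by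
          intro c
          rw [hzt_z, hzt_z, hz_flip]
        have hzt_succ : ∀ c, zt (t+1) c =
            Function.update (zt t c) i (if c i₀ then ystar i else y0 i) := by
          intro c
          funext j
          by_cases hj : j = i
          · subst hj
            rw [Function.update_self]
            simp only [hzt]
            rw [dif_pos hA, if_pos (show ((i:ℕ) < t+1) by omega)]
          · rw [Function.update_of_ne hj]
            simp only [hzt]
            by_cases h1 : j ∈ A
            · rw [dif_pos h1, dif_pos h1]
              have hiff : ((j : ℕ) < t + 1) ↔ ((j : ℕ) < t) := by
                constructor
                · intro h
                  rcases Nat.lt_succ_iff_lt_or_eq.mp h with h' | h'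
                  · exact h'
                  · exact absurd (Fin.ext (h'.trans hit.symm) : j = i) hj
                · intro h; exact Nat.lt_succ_of_lt h
              rw [if_congr hiff rfl rfl]
            · rw [dif_neg h1, dif_neg h1]
        -- the partial product over the other indices
        set P : ({j // j ∈ A} → Bool) → ℝ := fun c =>
          ∏ j ∈ A.attach.erase i₀, (if ((j : Fin n) : ℕ) < t then g c j y else 2⁻¹) with hP
        have hsucc_iff : ∀ (j : {j // j ∈ A}), j ≠ i₀ →
            (((j : Fin n) : ℕ) < t + 1 ↔ ((j : Fin n) : ℕ) < t) := by
          intro j hj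
          constructor
          · intro h
            rcases Nat.lt_succ_iff_lt_or_eq.mp h with h' | h'
            · exact h'
            · exact absurd (Subtype.ext (Fin.ext (h'.trans hit.symm))) hj
          · intro h; exact Nat.lt_succ_of_lt h
        have hwt : ∀ c, w t c = 2⁻¹ * P c := by
          intro c
          simp only [hw, hP]
          rw [← Finset.mul_prod_erase A.attach _ (Finset.mem_attach A i₀)]
          congr 1
          rw [if_neg (show ¬(((i₀ : Fin n):ℕ) < t) from by exact (show ¬(t < t) by omega))]
        have hwt1 : ∀ c, w (t+1) c = g c i₀ y * P c := by
          intro c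
          simp only [hw, hP]
          rw [← Finset.mul_prod_erase A.attach _ (Finset.mem_attach A i₀)]
          congr 1
          · rw [if_pos (show (((i₀ : Fin n):ℕ) < t+1) from by exact (show t < t+1 by omega))]
          · exact Finset.prod_congr rfl (fun j hj => by
              rw [if_congr (hsucc_iff j (Finset.ne_of_mem_erase hj)) rfl rfl])
        have hsum_flip : ∀ F : ({j // j ∈ A} → Bool) → ℝ,
            ∑ c : ({j // j ∈ A} → Bool), F (flip c) = ∑ c : ({j // j ∈ A} → Bool), F c :=
          fun F => Fintype.sum_bijective flip hinv.bijective _ _ (fun c => rfl)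
        have pair : ∀ c, u (zt (t+1) c) * w (t+1) c + u (zt (t+1) (flip c)) * w (t+1) (flip c)
            = u (zt t c) * w t c + u (zt t (flip c)) * w t (flip c) := by
          intro c
          have hg_flip : ∀ (j : {j // j ∈ A}), ((j : Fin n) : ℕ) < t →
              g (flip c) j y = g c j y := by
            intro j hjt
            have hjne : j ≠ i₀ := by
              intro h
              rw [h] at hjt
              exact lt_irrefl t hjt
            have hzj : z (flip c) (j : Fin n) y = z c (j : Fin n) y := by
              apply zagree
              intro k hk hkj
              apply hflip_ne
              intro hcon
              have hke : k = i := congrArg Subtype.val hcon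
              have h1 : (k : ℕ) < ((j : Fin n) : ℕ) := Fin.lt_def.mp hkj
              rw [hke, hit] at h1
              omega
            rw [hg, hg, hr, hr, hzj, hflip_ne c j hjne]
          have hP_flip : P (flip c) = P c := by
            simp only [hP]
            refine Finset.prod_congr rfl (fun j _ => ?_)
            by_cases h : ((j : Fin n) : ℕ) < t
            · rw [if_pos h, if_pos h, hg_flip j h]
            · rw [if_neg h, if_neg h]
          have hab : u (Function.update (zt t c) i (ystar i)) ≠
              u (Function.update (zt t c) i (y0 i)) := by
            have := hne y i hA c
            rwa [← hzt_z c] at this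
          have hrc : r c i y =
              (u (zt t c) - u (Function.update (zt t c) i (y0 i))) /
                (u (Function.update (zt t c) i (ystar i)) - u (Function.update (zt t c) i (y0 i))) := by
            rw [hr, ← hzt_z c]
          have hr_flip : r (flip c) i y = r c i y := by
            rw [hr, hr, hz_flip c]
          have hu1 : ∀ c', zt t c' = zt t c → u (zt (t+1) c') =
              if c' i₀ then u (Function.update (zt t c) i (ystar i))
              else u (Function.update (zt t c) i (y0 i)) := by
            intro c' hcc
            rw [hzt_succ, hcc]
            by_cases h : c' i₀
            · rw [if_pos h, if_pos h]
            · rw [if_neg h, if_neg h]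
          have hkey : u (Function.update (zt t c) i (ystar i)) * r c i y
              + u (Function.update (zt t c) i (y0 i)) * (1 - r c i y) = u (zt t c) := by
            rw [hrc]
            have h0 : u (Function.update (zt t c) i (ystar i)) -
                u (Function.update (zt t c) i (y0 i)) ≠ 0 := sub_ne_zero.mpr hab
            field_simp
            ring
          have hgc : g c i₀ y = if c i₀ then r c i y else 1 - r c i y := hg c i₀ y
          have hgf : g (flip c) i₀ y = if c i₀ then 1 - r c i y else r c i y := by
            rw [hg, hflip_i₀, hr_flip]
            cases c i₀ <;> simp
          rw [hu1 c rfl, hu1 (flip c) (hzt_flip c), hwt1 c, hwt1 (flip c), hwt c,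
            hwt (flip c), hzt_flip c, hP_flip, hgc, hgf, hflip_i₀]
          cases hcb : c i₀
          · simp only [Bool.not_false, Bool.false_eq_true, Bool.true_eq_false, if_true, if_false]
            linear_combination P c * hkey
          · simp only [Bool.not_true, Bool.false_eq_true, Bool.true_eq_false, if_true, if_false]
            linear_combination P c * hkey
        have e1 : ∑ c : ({j // j ∈ A} → Bool),
            (u (zt (t+1) c) * w (t+1) c + u (zt (t+1) (flip c)) * w (t+1) (flip c))
            = 2 * ∑ c : ({j // j ∈ A} → Bool), u (zt (t+1) c) * w (t+1) c := by
          rw [Finset.sum_add_distrib, hsum_flip (fun c => u (zt (t+1) c) * w (t+1) c), two_mul]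
        have e0 : ∑ c : ({j // j ∈ A} → Bool),
            (u (zt t c) * w t c + u (zt t (flip c)) * w t (flip c))
            = 2 * ∑ c : ({j // j ∈ A} → Bool), u (zt t c) * w t c := by
          rw [Finset.sum_add_distrib, hsum_flip (fun c => u (zt t c) * w t c), two_mul]
        have e2 : (2 : ℝ) * ∑ c : ({j // j ∈ A} → Bool), u (zt (t+1) c) * w (t+1) c
            = 2 * ∑ c : ({j // j ∈ A} → Bool), u (zt t c) * w t c := by
          rw [← e1, ← e0]
          exact Finset.sum_congr rfl (fun c _ => pair c)
        exact mul_left_cancel₀ (two_ne_zero) e2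
      · push_neg at hmem
        have hne_t : ∀ j : Fin n, j ∈ A → (j : ℕ) ≠ t := by
          intro j hj hjt
          have hn' : t < n := hjt ▸ j.isLt
          have hje : (⟨t, hn'⟩ : Fin n) = j := Fin.ext hjt.symm
          exact hmem hn' (hje ▸ hj)
        have hiff : ∀ j : Fin n, j ∈ A → (((j : ℕ) < t + 1) ↔ ((j : ℕ) < t)) := by
          intro j hj
          have := hne_t j hj
          omega
        refine Finset.sum_congr rfl (fun c _ => ?_)
        congr 1
        · congr 1
          funext j
          simp only [hzt]
          by_cases h1 : j ∈ A
          · rw [dif_pos h1, dif_pos h1, if_congr (hiff j h1) rfl rfl]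
          · rw [dif_neg h1, dif_neg h1]
        · simp only [hw]
          exact Finset.prod_congr rfl (fun j _ => by
            rw [if_congr (hiff (j : Fin n) j.2) rfl rfl])
  rw [← key n]
  refine Finset.sum_congr rfl (fun c _ => ?_)
  congr 1
  · congr 1
    funext j
    rw [hyhat]
    simp only [hzt]
    by_cases h1 : j ∈ A
    · rw [dif_pos h1, dif_pos h1, if_pos j.isLt]
    · rw [dif_neg h1, dif_neg h1]
  · simp only [hw]
    exact Finset.prod_congr rfl (fun j _ => by
      rw [if_pos (j : Fin n).isLt])
end

section
/- Suppose given Π : Fin n → Finset (Fin n) with Π i ⊆ {j : j < i} for every i (the parent sets of a directional utility diagram), and suppose that for every i the conditional utility ratio R i depends only on the coordinates in {i} ∪ Π i (the conditional utility independence structure encoded by the diagram). Then for every y: u y = Σ over all c : Fin n → Bool of u (y^c) · ∏_{i : Fin n} G_i(c,y), where G_i(c,y) = R i ((y^c)[i := y i]) if c i = true and G_i(c,y) = 1 − R i ((y^c)[i := y i]) if c i = false. In particular, for each fixed c the factor G_i(c,y) depends only on the single coordinate y i, so u is a linear combination of the criterion weights u(y^c) and of conditional utility functions each having a single attribute as argument.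 -/
/-- In a directional utility diagram (parent sets `Pa i ⊆ {j | j < i}`,
with each conditional utility ratio `R i` depending only on the coordinates in
`{i} ∪ Pa i`), the utility function expands as a linear combination of criterion
weights `u (y^c)` and conditional utility functions of a single attribute. -/
theorem directional_utility_diagram_expansion {n : ℕ} {α : Fin n → Type*}
    [∀ i, Nonempty (α i)]
    (u : (∀ i, α i) → ℝ) (y0 ystar : ∀ i, α i)
    (hne : ∀ (i : Fin n) (y : ∀ i, α i),
      u (Function.update y i (ystar i)) ≠ u (Function.update y i (y0 i)))
    (R : Fin n → (∀ i, α i) → ℝ)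
    (hR : ∀ (i : Fin n) (y : ∀ i, α i), R i y =
      (u y - u (Function.update y i (y0 i))) /
        (u (Function.update y i (ystar i)) - u (Function.update y i (y0 i))))
    (Pa : Fin n → Finset (Fin n))
    (hPa : ∀ i : Fin n, ∀ j ∈ Pa i, j < i)
    -- `R i` depends only on the coordinates in `{i} ∪ Pa i`
    (hdep : ∀ (i : Fin n) (y y' : ∀ i, α i),
      (∀ j : Fin n, (j = i ∨ j ∈ Pa i) → y j = y' j) → R i y = R i y') :
    ∀ y : ∀ i, α i,
      u y = ∑ c : Fin n → Bool,
        u (fun j => if c j then ystar j else y0 j) *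
          ∏ i : Fin n,
            (if c i then
              R i (Function.update (fun j => if c j then ystar j else y0 j) i (y i))
            else
              1 - R i (Function.update (fun j => if c j then ystar j else y0 j) i (y i))) := by
  intro y
  classical
  have key : ∀ (i : Fin n) (z : ∀ j, α j),
      u z = R i z * u (Function.update z i (ystar i))
            + (1 - R i z) * u (Function.update z i (y0 i)) := by
    intro i z
    have hd : u (Function.update z i (ystar i)) - u (Function.update z i (y0 i)) ≠ 0 :=
      sub_ne_zero.mpr (hne i z)
    rw [hR]
    field_simp
    ring
  set G : (Fin n → Bool) → Fin n → ℝ := fun c i =>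
    if c i then R i (Function.update (fun j => if c j then ystar j else y0 j) i (y i))
    else 1 - R i (Function.update (fun j => if c j then ystar j else y0 j) i (y i)) with hG
  set mix : ℕ → (Fin n → Bool) → (∀ j, α j) := fun k c j =>
    if (j : ℕ) < k then (if c j then ystar j else y0 j) else y j with hmix
  set A : ℕ → Finset (Fin n → Bool) := fun k =>
    Finset.univ.filter (fun c => ∀ i : Fin n, k ≤ (i : ℕ) → c i = false) with hA
  have hmemA : ∀ k c, c ∈ A k ↔ ∀ i : Fin n, k ≤ (i : ℕ) → c i = false := by
    intro k c; simp [hA]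
  have claim : ∀ k : ℕ, k ≤ n →
      u y = ∑ c ∈ A k, u (mix k c) * ∏ i : Fin n, (if (i : ℕ) < k then G c i else 1) := by
    intro k
    induction k with
    | zero =>
      intro _
      have h0 : A 0 = {fun _ => false} := by
        ext c
        rw [hmemA]
        simp only [Finset.mem_singleton]
        constructor
        · intro h; funext i; exact h i (Nat.zero_le _)
        · intro h i _; rw [h]
      rw [h0, Finset.sum_singleton]
      have h1 : mix 0 (fun _ => false) = y := by
        funext j; simp [hmix]
      simp [h1]
    | succ k ih =>
      intro hk1
      have hk : k < n := hk1
      set κ : Fin n := ⟨k, hk⟩ with hκ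
      have hκval : (κ : ℕ) = k := rfl
      have hsplit : A (k + 1) = A k ∪ (A k).image (fun c => Function.update c κ true) := by
        ext c
        simp only [Finset.mem_union, Finset.mem_image, hmemA]
        constructor
        · intro h
          by_cases hc : c κ = true
          · right
            refine ⟨Function.update c κ false, ?_, ?_⟩
            · intro i hi
              rcases eq_or_ne i κ with h' | hiκ
              · rw [h']; simp
              · rw [Function.update_of_ne hiκ]
                refine h i ?_
                have : (i : ℕ) ≠ (κ : ℕ) := fun hh => hiκ (Fin.ext hh)
                omega
            · rw [Function.update_idem, ← hc, Function.update_eq_self]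
          · left
            intro i hi
            rcases eq_or_ne i κ with h' | hiκ
            · rw [h']; exact Bool.eq_false_iff.mpr (by simpa using hc)
            · refine h i ?_
              have : (i : ℕ) ≠ (κ : ℕ) := fun hh => hiκ (Fin.ext hh)
              omega
        · rintro (h | ⟨d, hd, rfl⟩)
          · intro i hi; exact h i (by omega)
          · intro i hi
            have hiκ : i ≠ κ := by
              intro h'
              rw [h'] at hi
              omega
            rw [Function.update_of_ne hiκ]
            exact hd i (by omega)
      have hdisj : Disjoint (A k) ((A k).image (fun c => Function.update c κ true)) := by
        rw [Finset.disjoint_left]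
        intro c hc hc'
        have h1 : c κ = false := (hmemA k c).mp hc κ (le_of_eq hκval.symm)
        rcases Finset.mem_image.mp hc' with ⟨d, _, rfl⟩
        simp at h1
      have hinj : Set.InjOn (fun c : Fin n → Bool => Function.update c κ true) ↑(A k) := by
        intro c hc d hd h
        funext j
        rcases eq_or_ne j κ with h' | hj
        · rw [h', (hmemA k c).mp hc κ (le_of_eq hκval.symm),
            (hmemA k d).mp hd κ (le_of_eq hκval.symm)]
        · have := congrFun h j
          simpa [Function.update_of_ne hj] using this
      rw [hsplit, Finset.sum_union hdisj, Finset.sum_image hinj, ← Finset.sum_add_distrib]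
      rw [ih (le_of_lt hk)]
      refine Finset.sum_congr rfl ?_
      intro c hc
      have hcA := (hmemA k c).mp hc
      have hcκ : c κ = false := hcA κ (le_of_eq hκval.symm)
      set c' : Fin n → Bool := Function.update c κ true with hc'
      have hc'κ : c' κ = true := by simp [hc']
      have hc'ne : ∀ j : Fin n, j ≠ κ → c' j = c j := fun j hj => Function.update_of_ne hj _ _
      -- mix facts
      have hmixstep : ∀ (d : Fin n → Bool) (j : Fin n), j ≠ κ → mix (k+1) d j = mix k d j := by
        intro d j hj
        have hjk : (j : ℕ) ≠ k := fun h => hj (Fin.ext (h.trans hκval.symm))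
        simp only [hmix]
        rcases Nat.lt_or_ge (j : ℕ) k with h | h
        · rw [if_pos h, if_pos (by omega)]
        · rw [if_neg (by omega), if_neg (by omega)]
      have hmixc' : mix k c' = mix k c := by
        funext j
        simp only [hmix]
        rcases Nat.lt_or_ge (j : ℕ) k with h | h
        · have hj : j ≠ κ := fun h' => by rw [h'] at h; omega
          rw [if_pos h, if_pos h, hc'ne j hj]
        · rw [if_neg (by omega), if_neg (by omega)]
      have hmix1 : mix (k+1) c = Function.update (mix k c) κ (y0 κ) := by
        funext j
        rcases eq_or_ne j κ with h' | hj
        · rw [h']; simp [hmix, hcκ, hκval]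
        · rw [Function.update_of_ne hj, hmixstep c j hj]
      have hmix2 : mix (k+1) c' = Function.update (mix k c) κ (ystar κ) := by
        funext j
        rcases eq_or_ne j κ with h' | hj
        · rw [h']; simp [hmix, hc'κ, hκval]
        · rw [Function.update_of_ne hj, hmixstep c' j hj, hmixc']
      -- G agrees below k
      have hGeq : ∀ i : Fin n, (i : ℕ) < k → G c' i = G c i := by
        intro i hi
        have hiκ : i ≠ κ := fun h => by rw [h] at hi; omega
        have hc'i : c' i = c i := hc'ne i hiκ
        have hpt : R i (Function.update (fun j => if c' j then ystar j else y0 j) i (y i))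
            = R i (Function.update (fun j => if c j then ystar j else y0 j) i (y i)) := by
          apply hdep
          intro j hj
          rcases hj with rfl | hj
          · simp
          · have hjlt : (j : ℕ) < (i : ℕ) := hPa i j hj
            have hjκ : j ≠ κ := fun h' => by rw [h'] at hjlt; omega
            have hji : j ≠ i := fun h => by rw [h] at hjlt; omega
            rw [Function.update_of_ne hji, Function.update_of_ne hji, hc'ne j hjκ]
        simp only [hG, hc'i, hpt]
      -- the R value at κ
      have hr : R κ (Function.update (fun j => if c j then ystar j else y0 j) κ (y κ))
          = R κ (mix k c) := by
        apply hdep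
        intro j hj
        rcases hj with rfl | hj
        · have h1 : ¬ (κ : ℕ) < k := by omega
          simp [hmix, h1]
        · have hjκlt : (j : ℕ) < k := by have := hPa κ j hj; omega
          have hjκ : j ≠ κ := fun h => by rw [h] at hjκlt; omega
          rw [Function.update_of_ne hjκ]
          simp [hmix, hjκlt]
      have hrc' : R κ (Function.update (fun j => if c' j then ystar j else y0 j) κ (y κ))
          = R κ (mix k c) := by
        rw [← hr]
        apply hdep
        intro j hj
        rcases hj with rfl | hj
        · simp
        · have hjκlt : (j : ℕ) < k := by have := hPa κ j hj; omega
          have hjκ : j ≠ κ := fun h => by rw [h] at hjκlt; omega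
          rw [Function.update_of_ne hjκ, Function.update_of_ne hjκ, hc'ne j hjκ]
      -- product manipulation
      have hprod1 : ∀ d : Fin n → Bool,
          (fun i : Fin n => if (i : ℕ) < k + 1 then G d i else 1)
            = Function.update (fun i : Fin n => if (i : ℕ) < k then G d i else 1) κ (G d κ) := by
        intro d
        funext i
        rcases eq_or_ne i κ with h' | hi
        · rw [h']; simp [hκval]
        · have : (i : ℕ) ≠ k := fun h => hi (Fin.ext (h.trans hκval.symm))
          rw [Function.update_of_ne hi]
          rcases Nat.lt_or_ge (i : ℕ) k with h | h
          · rw [if_pos h, if_pos (by omega)]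
          · rw [if_neg (by omega), if_neg (by omega)]
      have hQ : ∀ d : Fin n → Bool,
          (∏ i : Fin n, (if (i : ℕ) < k + 1 then G d i else 1))
            = G d κ * ∏ i ∈ Finset.univ.erase κ, (if (i : ℕ) < k then G d i else 1) := by
        intro d
        rw [hprod1 d, ← Finset.mul_prod_erase Finset.univ _ (Finset.mem_univ κ)]
        congr 1
        · simp
        · apply Finset.prod_congr rfl
          intro i hi
          rw [Function.update_of_ne (Finset.ne_of_mem_erase hi)]
      have hQ0 : (∏ i : Fin n, (if (i : ℕ) < k then G c i else 1))
          = ∏ i ∈ Finset.univ.erase κ, (if (i : ℕ) < k then G c i else 1) := by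
        rw [← Finset.mul_prod_erase Finset.univ _ (Finset.mem_univ κ)]
        rw [if_neg (by omega), one_mul]
      have hQc' : (∏ i ∈ Finset.univ.erase κ, (if (i : ℕ) < k then G c' i else 1))
          = ∏ i ∈ Finset.univ.erase κ, (if (i : ℕ) < k then G c i else 1) := by
        apply Finset.prod_congr rfl
        intro i _
        rcases Nat.lt_or_ge (i : ℕ) k with h | h
        · rw [if_pos h, if_pos h, hGeq i h]
        · rw [if_neg (by omega), if_neg (by omega)]
      have hGcκ : G c κ = 1 - R κ (mix k c) := by
        simp only [hG, hcκ]
        rw [hr]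
        simp
      have hGc'κ : G c' κ = R κ (mix k c) := by
        simp only [hG, hc'κ]
        rw [hrc']
        simp
      rw [hQ c, hQ c', hQ0, hQc', hmix1, hmix2, hGcκ, hGc'κ]
      rw [key κ (mix k c)]
      ring
  have hfin := claim n (le_refl n)
  rw [hfin]
  have hAn : A n = Finset.univ := by
    ext c
    rw [hmemA]
    simp only [Finset.mem_univ, iff_true]
    intro i hi
    exact absurd i.isLt (Nat.not_lt.mpr hi)
  rw [hAn]
  apply Finset.sum_congr rfl
  intro c _
  have h1 : mix n c = fun j => if c j then ystar j else y0 j := by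
    funext j
    simp [hmix, j.isLt]
  rw [h1]
  congr 1
  apply Finset.prod_congr rfl
  intro i _
  rw [if_pos i.isLt]
end

section
/- Suppose that for every i : Fin n the conditional utility ratio R i depends only on the coordinate i (i.e. every attribute is utility independent of all the others). Then for every y: u y = Σ over all c : Fin n → Bool of u (y^c) · ∏_{i : Fin n} (R i y if c i = true, and 1 − R i y if c i = false). This is the multilinear utility factorization. -/
/-- If every attribute is utility independent of all the others
(each conditional utility ratio `R i` depends only on the coordinate `i`), then
`u` has the multilinear utility factorization. -/
theorem multilinear_utility_factorization {n : ℕ} {α : Fin n → Type*}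
    [∀ i, Nonempty (α i)]
    (u : (∀ i, α i) → ℝ) (y0 ystar : ∀ i, α i)
    (hne : ∀ (i : Fin n) (y : ∀ i, α i),
      u (Function.update y i (ystar i)) ≠ u (Function.update y i (y0 i)))
    (R : Fin n → (∀ i, α i) → ℝ)
    (hR : ∀ (i : Fin n) (y : ∀ i, α i), R i y =
      (u y - u (Function.update y i (y0 i))) /
        (u (Function.update y i (ystar i)) - u (Function.update y i (y0 i))))
    -- `R i` depends only on the coordinate `i`
    (hdep : ∀ (i : Fin n) (y y' : ∀ i, α i), y i = y' i → R i y = R i y') :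
    ∀ y : ∀ i, α i,
      u y = ∑ c : Fin n → Bool,
        u (fun j => if c j then ystar j else y0 j) *
          ∏ i : Fin n, (if c i then R i y else 1 - R i y) := by
  classical
  have key : ∀ (i : Fin n) (z : ∀ i, α i),
      u z = (1 - R i z) * u (Function.update z i (y0 i))
        + R i z * u (Function.update z i (ystar i)) := by
    intro i z
    have hd : u (Function.update z i (ystar i)) - u (Function.update z i (y0 i)) ≠ 0 :=
      sub_ne_zero.mpr (hne i z)
    rw [hR]
    field_simp
    ring
  -- auxiliary point
  set pt : (∀ i, α i) → Finset (Fin n) → Finset (Fin n) → (∀ i, α i) :=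
    fun y S T => fun j => if j ∈ T then ystar j else if j ∈ S then y0 j else y j with hpt
  have aux : ∀ (S : Finset (Fin n)) (y : ∀ i, α i),
      u y = ∑ T ∈ S.powerset,
        u (pt y S T) * ∏ i ∈ S, (if i ∈ T then R i y else 1 - R i y) := by
    intro S
    induction S using Finset.induction_on with
    | empty => intro y; simp [hpt]
    | @insert a S ha IH =>
      intro y
      rw [Finset.sum_powerset_insert ha, IH y, ← Finset.sum_add_distrib]
      refine Finset.sum_congr rfl ?_
      intro T hT
      have hTS : T ⊆ S := Finset.mem_powerset.mp hT
      have haT : a ∉ T := fun h => ha (hTS h)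
      have hRa : R a (pt y S T) = R a y := by
        apply hdep
        simp [hpt, haT, ha]
      have h0 : Function.update (pt y S T) a (y0 a) = pt y (insert a S) T := by
        funext j
        rcases eq_or_ne j a with rfl | hj
        · simp [hpt, Function.update_self, haT]
        · simp [hpt, Function.update_of_ne hj, Finset.mem_insert, hj]
      have h1 : Function.update (pt y S T) a (ystar a) = pt y (insert a S) (insert a T) := by
        funext j
        rcases eq_or_ne j a with rfl | hj
        · simp [hpt, Function.update_self]
        · simp [hpt, Function.update_of_ne hj, Finset.mem_insert, hj]
      have hp0 : (∏ i ∈ insert a S, (if i ∈ T then R i y else 1 - R i y))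
          = (1 - R a y) * ∏ i ∈ S, (if i ∈ T then R i y else 1 - R i y) := by
        rw [Finset.prod_insert ha, if_neg haT]
      have hp1 : (∏ i ∈ insert a S, (if i ∈ insert a T then R i y else 1 - R i y))
          = R a y * ∏ i ∈ S, (if i ∈ T then R i y else 1 - R i y) := by
        rw [Finset.prod_insert ha, if_pos (Finset.mem_insert_self a T)]
        congr 1
        refine Finset.prod_congr rfl ?_
        intro i hi
        have : i ≠ a := fun h => ha (h ▸ hi)
        simp [Finset.mem_insert, this]
      rw [key a (pt y S T), hRa, h0, h1, hp0, hp1]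
      ring
  intro y
  rw [aux Finset.univ y]
  rw [Finset.powerset_univ]
  refine (Fintype.sum_bijective (fun c : Fin n → Bool => Finset.univ.filter (fun i => c i))
    ⟨?_, ?_⟩ _ _ ?_).symm
  · intro c c' h
    funext i
    have := Finset.ext_iff.mp h i
    simpa using this
  · intro T
    exact ⟨fun i => decide (i ∈ T), by ext i; simp⟩
  · intro c
    congr 1
    · congr 1
      funext j
      by_cases h : c j <;> simp [hpt, h]
    · refine Finset.prod_congr rfl ?_
      intro i _
      by_cases h : c i <;> simp [hpt, h]
end

section
/- Let Πp Πu : Fin n → Finset (Fin n) with Πp i ⊆ {j : j < i} and Πu i ⊆ {j : j < i} for every i. For each i : Fin n let p_i : (∀ j, α j) → ℝ be a nonnegative measurable function depending only on the coordinates in {i} ∪ Πp i and satisfying ∫ p_i (y[i := x]) dμ i (x) = 1 for every y (a conditional density given the probabilistic parents). Let K := Fin n → Bool, let w : K → ℝ, and for each i let g_i : K → α i → ℝ be bounded, measurable in the second argument, and such that g_i c = g_i c' whenever c and c' agree on {i} ∪ Πu i. Define the joint utility U y = Σ_{c ∈ K} w c · ∏_i g_i c (y i) and the joint density P y = ∏_i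 p_i y. Define the backward-induction recursion: v_n (c, y) = 1, and for k = n−1 down to 0, v_k (c, y) = ∫ v_{k+1} (c, y[k := x]) · g_k c x · p_k (y[k := x]) dμ k (x). Then each v_k (c, ·) depends only on the coordinates in {j : j < k}; in particular v_0 (c, ·) is constant, and for every y: ∫ U · P dμ = Σ_{c ∈ K} w c · v_0 (c, y). -/
open MeasureTheory

section Aux
open Function Finset
open scoped ENNReal

section Bmarg

variable {n : ℕ} {α : Fin n → Type*} [∀ i, MeasurableSpace (α i)]

/-- Bochner analogue of `lmarginal`. -/
noncomputable def bmarg (μ : ∀ i, Measure (α i)) (s : Finset (Fin n))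
    (f : (∀ i, α i) → ℝ) (x : ∀ i, α i) : ℝ :=
  ∫ z : ∀ i : s, α i, f (updateFinset x s z) ∂(Measure.pi fun i : s => μ i)

theorem bmarg_empty (μ : ∀ i, Measure (α i)) (f : (∀ i, α i) → ℝ) (x : ∀ i, α i) :
    bmarg μ ∅ f x = f x := by
  rw [bmarg, Measure.pi_of_empty fun i : (∅ : Finset (Fin n)) => μ i,
    integral_dirac' _ _ StronglyMeasurable.of_subsingleton_dom]
  congr 1

theorem bmarg_singleton (μ : ∀ i, Measure (α i)) (f : (∀ i, α i) → ℝ) (i : Fin n)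
    (x : ∀ i, α i) :
    bmarg μ {i} f x = ∫ xi, f (update x i xi) ∂μ i := by
  let e := (MeasurableEquiv.piUnique fun j : ({i} : Finset (Fin n)) ↦ α j).symm
  calc bmarg μ {i} f x
      = ∫ (y : α (default : ({i} : Finset (Fin n)))),
          f (updateFinset x {i} (e y)) ∂μ (default : ({i} : Finset (Fin n))) := by
        rw [bmarg, ← ((measurePreserving_piUnique
          fun j : ({i} : Finset (Fin n)) ↦ μ j).symm _).integral_comp'
          (fun z => f (updateFinset x {i} z))]
    _ = ∫ xi, f (update x i xi) ∂μ i := by simp [update_eq_updateFinset]; rfl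

theorem bmarg_union (μ : ∀ i, Measure (α i)) [∀ i, SigmaFinite (μ i)]
    {s t : Finset (Fin n)} (hst : Disjoint s t)
    (f : (∀ i, α i) → ℝ) (x : ∀ i, α i)
    (hint : Integrable (fun z : ∀ i : ↥(s ∪ t), α i => f (updateFinset x (s ∪ t) z))
      (Measure.pi fun i : ↥(s ∪ t) => μ i)) :
    bmarg μ (s ∪ t) f x = bmarg μ s (bmarg μ t f) x := by
  let e := MeasurableEquiv.piFinsetUnion α hst
  calc bmarg μ (s ∪ t) f x
      = ∫ (y : ((i : s) → α i) × ((j : t) → α j)), f (updateFinset x (s ∪ t) (e y))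
          ∂(Measure.pi fun i : s ↦ μ i).prod (.pi fun j : t ↦ μ j) := by
        rw [bmarg, ← (measurePreserving_piFinsetUnion hst μ).integral_comp'
          (fun z => f (updateFinset x (s ∪ t) z))]
    _ = ∫ (y : (i : s) → α i), ∫ (z : (j : t) → α j), f (updateFinset x (s ∪ t) (e (y, z)))
          ∂(Measure.pi fun j : t ↦ μ j) ∂(Measure.pi fun i : s ↦ μ i) := by
        apply integral_prod
        exact ((measurePreserving_piFinsetUnion hst μ).integrable_comp_emb
          e.measurableEmbedding).2 hint
    _ = bmarg μ s (bmarg μ t f) x := by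
        simp_rw [bmarg, updateFinset_updateFinset hst]
        rfl

theorem bmarg_insert (μ : ∀ i, Measure (α i)) [∀ i, SigmaFinite (μ i)]
    {s : Finset (Fin n)} {i : Fin n} (hi : i ∉ s)
    (f : (∀ i, α i) → ℝ) (x : ∀ i, α i)
    (hint : Integrable (fun z : ∀ j : ↥(insert i s), α j => f (updateFinset x (insert i s) z))
      (Measure.pi fun j : ↥(insert i s) => μ j)) :
    bmarg μ (insert i s) f x = ∫ xi, bmarg μ s f (update x i xi) ∂μ i := by
  rw [Finset.insert_eq] at hint ⊢
  rw [bmarg_union μ (Finset.disjoint_singleton_left.mpr hi) f x hint, bmarg_singleton]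

theorem bmarg_univ (μ : ∀ i, Measure (α i)) [∀ i, SigmaFinite (μ i)] (f : (∀ i, α i) → ℝ) (x : ∀ i, α i) :
    bmarg μ Finset.univ f x = ∫ y, f y ∂Measure.pi μ := by
  let e : { j // j ∈ Finset.univ } ≃ Fin n := Equiv.subtypeUnivEquiv Finset.mem_univ
  have h := (measurePreserving_piCongrLeft μ e).integral_comp' f
  rw [bmarg, ← h]
  congr 1
  ext z
  congr 1
  ext j
  simp only [updateFinset_def, Finset.mem_univ, dif_pos, Finset.coe_sort_coe]
  exact (Equiv.piCongrLeft_apply_apply α e z ⟨j, Finset.mem_univ j⟩).symm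

end Bmarg

section Deun

variable {n : ℕ} {α : Fin n → Type*} [∀ i, MeasurableSpace (α i)]
  (μ : ∀ i, Measure (α i)) [∀ i, SigmaFinite (μ i)]

theorem deun_p_int (p : Fin n → (∀ j, α j) → ℝ)
    (hpnorm : ∀ (i : Fin n) (y : ∀ j, α j), ∫ x, p i (update y i x) ∂(μ i) = 1)
    (i : Fin n) (y : ∀ j, α j) :
    Integrable (fun x => p i (update y i x)) (μ i) := by
  by_contra h
  have := hpnorm i y
  rw [integral_undef h] at this
  norm_num at this

theorem deun_p_lint (p : Fin n → (∀ j, α j) → ℝ)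
    (hpnonneg : ∀ i y, 0 ≤ p i y)
    (hpnorm : ∀ (i : Fin n) (y : ∀ j, α j), ∫ x, p i (update y i x) ∂(μ i) = 1)
    (i : Fin n) (y : ∀ j, α j) :
    ∫⁻ x, ENNReal.ofReal (p i (update y i x)) ∂(μ i) = 1 := by
  rw [← ofReal_integral_eq_lintegral_ofReal (deun_p_int μ p hpnorm i y)
    (Filter.Eventually.of_forall fun x => hpnonneg i _), hpnorm i y, ENNReal.ofReal_one]

theorem deun_lmarg_one (Pap : Fin n → Finset (Fin n))
    (hPap : ∀ i : Fin n, ∀ j ∈ Pap i, j < i)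
    (p : Fin n → (∀ j, α j) → ℝ)
    (hpmeas : ∀ i, Measurable (p i))
    (hpnonneg : ∀ i y, 0 ≤ p i y)
    (hpdep : ∀ (i : Fin n) (y y' : ∀ j, α j),
      (∀ j : Fin n, (j = i ∨ j ∈ Pap i) → y j = y' j) → p i y = p i y')
    (hpnorm : ∀ (i : Fin n) (y : ∀ j, α j), ∫ x, p i (update y i x) ∂(μ i) = 1)
    (s : Finset (Fin n)) (y : ∀ j, α j) :
    (MeasureTheory.lmarginal μ s (fun z => ∏ i ∈ s, ENNReal.ofReal (p i z))) y = 1 := by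
  induction s using Finset.induction_on_max generalizing y with
  | empty => simp
  | insert a s ha ih =>
    have hanotmem : a ∉ s := fun h => lt_irrefl a (ha a h)
    have hmeas : Measurable fun z => ∏ i ∈ insert a s, ENNReal.ofReal (p i z) :=
      Finset.measurable_prod _ fun i _ => (hpmeas i).ennreal_ofReal
    rw [MeasureTheory.lmarginal_insert' _ hmeas hanotmem]
    have hfun : (fun x => ∫⁻ xa, (∏ i ∈ insert a s, ENNReal.ofReal (p i (update x a xa))) ∂μ a)
        = fun x => ∏ i ∈ s, ENNReal.ofReal (p i x) := by
      funext x
      have key : ∀ xa, ∏ i ∈ insert a s, ENNReal.ofReal (p i (update x a xa))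
          = ENNReal.ofReal (p a (update x a xa)) * ∏ i ∈ s, ENNReal.ofReal (p i x) := by
        intro xa
        rw [Finset.prod_insert hanotmem]
        congr 1
        refine Finset.prod_congr rfl fun i hi => ?_
        congr 1
        refine hpdep i _ _ fun j hj => ?_
        have hji : j ≠ a := by
          rcases hj with rfl | hj
          · exact fun hja => absurd (hja ▸ ha j hi) (lt_irrefl _)
          · intro hja
            exact absurd ((hja ▸ hPap i j hj).trans (ha i hi)) (lt_irrefl _)
        exact update_of_ne hji _ _
      simp_rw [key]
      have hm : Measurable fun xa : α a => ENNReal.ofReal (p a (update x a xa)) :=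
        ((hpmeas a).comp (measurable_update x)).ennreal_ofReal
      rw [lintegral_mul_const _ hm, deun_p_lint μ p hpnonneg hpnorm a x, one_mul]
    rw [hfun]
    exact ih y

theorem deun_integrable (Pap : Fin n → Finset (Fin n))
    (hPap : ∀ i : Fin n, ∀ j ∈ Pap i, j < i)
    (p : Fin n → (∀ j, α j) → ℝ)
    (hpmeas : ∀ i, Measurable (p i))
    (hpnonneg : ∀ i y, 0 ≤ p i y)
    (hpdep : ∀ (i : Fin n) (y y' : ∀ j, α j),
      (∀ j : Fin n, (j = i ∨ j ∈ Pap i) → y j = y' j) → p i y = p i y')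
    (hpnorm : ∀ (i : Fin n) (y : ∀ j, α j), ∫ x, p i (update y i x) ∂(μ i) = 1)
    (G : ∀ i : Fin n, α i → ℝ)
    (hGbdd : ∀ i : Fin n, ∃ M, ∀ x, |G i x| ≤ M)
    (hGmeas : ∀ i : Fin n, Measurable (G i))
    (s : Finset (Fin n)) (y : ∀ j, α j) :
    Integrable (fun z : ∀ i : s, α i =>
        ∏ i ∈ s, (G i (updateFinset y s z i) * p i (updateFinset y s z)))
      (Measure.pi fun i : s => μ i) := by
  choose M hM using hGbdd
  have hFmeas : Measurable fun w : ∀ j, α j => ∏ i ∈ s, (G i (w i) * p i w) :=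
    Finset.measurable_prod _ fun i _ =>
      ((hGmeas i).comp (measurable_pi_apply i)).mul (hpmeas i)
  have hmeas : Measurable fun z : ∀ i : s, α i =>
      ∏ i ∈ s, (G i (updateFinset y s z i) * p i (updateFinset y s z)) :=
    hFmeas.comp measurable_updateFinset
  refine ⟨hmeas.aestronglyMeasurable, ?_⟩
  have hbound : ∀ w : ∀ j, α j, (‖∏ i ∈ s, (G i (w i) * p i w)‖₊ : ℝ≥0∞)
      ≤ (∏ i ∈ s, ENNReal.ofReal (max (M i) 0)) * ∏ i ∈ s, ENNReal.ofReal (p i w) := by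
    intro w
    rw [← Finset.prod_mul_distrib]
    calc (‖∏ i ∈ s, (G i (w i) * p i w)‖₊ : ℝ≥0∞)
        = ∏ i ∈ s, (‖G i (w i) * p i w‖₊ : ℝ≥0∞) := by
          rw [← ENNReal.coe_finset_prod]
          norm_cast
          exact nnnorm_prod _ _
      _ ≤ ∏ i ∈ s, ENNReal.ofReal (max (M i) 0) * ENNReal.ofReal (p i w) := by
          refine Finset.prod_le_prod' fun i _ => ?_
          rw [← ENNReal.ofReal_mul (le_max_right _ _)]
          rw [← enorm_eq_nnnorm, ← ofReal_norm]
          refine ENNReal.ofReal_le_ofReal ?_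
          rw [Real.norm_eq_abs, abs_mul, abs_of_nonneg (hpnonneg i w)]
          exact mul_le_mul_of_nonneg_right
            ((hM i _).trans (le_max_left _ _)) (hpnonneg i w)
  calc ∫⁻ z, (‖∏ i ∈ s, (G i (updateFinset y s z i) * p i (updateFinset y s z))‖₊ : ℝ≥0∞)
        ∂(Measure.pi fun i : s => μ i)
      ≤ ∫⁻ z, (∏ i ∈ s, ENNReal.ofReal (max (M i) 0)) *
          ∏ i ∈ s, ENNReal.ofReal (p i (updateFinset y s z))
        ∂(Measure.pi fun i : s => μ i) :=
        lintegral_mono fun z => hbound _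
    _ = (∏ i ∈ s, ENNReal.ofReal (max (M i) 0)) *
        ∫⁻ z, ∏ i ∈ s, ENNReal.ofReal (p i (updateFinset y s z))
        ∂(Measure.pi fun i : s => μ i) := by
        refine lintegral_const_mul _ ?_
        exact (Finset.measurable_prod _ fun i _ =>
          (hpmeas i).ennreal_ofReal).comp measurable_updateFinset
    _ = (∏ i ∈ s, ENNReal.ofReal (max (M i) 0)) * 1 := by
        rw [show (∫⁻ z, ∏ i ∈ s, ENNReal.ofReal (p i (updateFinset y s z))
          ∂(Measure.pi fun i : s => μ i))
          = (MeasureTheory.lmarginal μ s (fun z => ∏ i ∈ s, ENNReal.ofReal (p i z))) y from rfl,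
          deun_lmarg_one μ Pap hPap p hpmeas hpnonneg hpdep hpnorm s y]
    _ < ⊤ := by
        rw [mul_one]
        exact ENNReal.prod_lt_top fun i _ => ENNReal.ofReal_lt_top

theorem deun_integrable_pi (Pap : Fin n → Finset (Fin n))
    (hPap : ∀ i : Fin n, ∀ j ∈ Pap i, j < i)
    (p : Fin n → (∀ j, α j) → ℝ)
    (hpmeas : ∀ i, Measurable (p i))
    (hpnonneg : ∀ i y, 0 ≤ p i y)
    (hpdep : ∀ (i : Fin n) (y y' : ∀ j, α j),
      (∀ j : Fin n, (j = i ∨ j ∈ Pap i) → y j = y' j) → p i y = p i y')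
    (hpnorm : ∀ (i : Fin n) (y : ∀ j, α j), ∫ x, p i (update y i x) ∂(μ i) = 1)
    (G : ∀ i : Fin n, α i → ℝ)
    (hGbdd : ∀ i : Fin n, ∃ M, ∀ x, |G i x| ≤ M)
    (hGmeas : ∀ i : Fin n, Measurable (G i))
    (y : ∀ j, α j) :
    Integrable (fun w : ∀ j, α j => ∏ i ∈ Finset.univ, (G i (w i) * p i w))
      (Measure.pi μ) := by
  choose M hM using hGbdd
  have hFmeas : Measurable fun w : ∀ j, α j => ∏ i ∈ Finset.univ, (G i (w i) * p i w) :=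
    Finset.measurable_prod _ fun i _ =>
      ((hGmeas i).comp (measurable_pi_apply i)).mul (hpmeas i)
  refine ⟨hFmeas.aestronglyMeasurable, ?_⟩
  have hbound : ∀ w : ∀ j, α j, (‖∏ i ∈ Finset.univ, (G i (w i) * p i w)‖₊ : ℝ≥0∞)
      ≤ (∏ i ∈ Finset.univ, ENNReal.ofReal (max (M i) 0)) *
        ∏ i ∈ Finset.univ, ENNReal.ofReal (p i w) := by
    intro w
    rw [← Finset.prod_mul_distrib]
    calc (‖∏ i ∈ Finset.univ, (G i (w i) * p i w)‖₊ : ℝ≥0∞)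
        = ∏ i ∈ Finset.univ, (‖G i (w i) * p i w‖₊ : ℝ≥0∞) := by
          rw [← ENNReal.coe_finset_prod]
          norm_cast
          exact nnnorm_prod _ _
      _ ≤ ∏ i ∈ Finset.univ, ENNReal.ofReal (max (M i) 0) * ENNReal.ofReal (p i w) := by
          refine Finset.prod_le_prod' fun i _ => ?_
          rw [← ENNReal.ofReal_mul (le_max_right _ _)]
          rw [← enorm_eq_nnnorm, ← ofReal_norm]
          refine ENNReal.ofReal_le_ofReal ?_
          rw [Real.norm_eq_abs, abs_mul, abs_of_nonneg (hpnonneg i w)]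
          exact mul_le_mul_of_nonneg_right
            ((hM i _).trans (le_max_left _ _)) (hpnonneg i w)
  calc ∫⁻ w, (‖∏ i ∈ Finset.univ, (G i (w i) * p i w)‖₊ : ℝ≥0∞) ∂(Measure.pi μ)
      ≤ ∫⁻ w, (∏ i ∈ Finset.univ, ENNReal.ofReal (max (M i) 0)) *
          ∏ i ∈ Finset.univ, ENNReal.ofReal (p i w) ∂(Measure.pi μ) :=
        lintegral_mono fun w => hbound _
    _ = (∏ i ∈ Finset.univ, ENNReal.ofReal (max (M i) 0)) *
        ∫⁻ w, ∏ i ∈ Finset.univ, ENNReal.ofReal (p i w) ∂(Measure.pi μ) := by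
        refine lintegral_const_mul _ ?_
        exact Finset.measurable_prod _ fun i _ => (hpmeas i).ennreal_ofReal
    _ = (∏ i ∈ Finset.univ, ENNReal.ofReal (max (M i) 0)) * 1 := by
        rw [MeasureTheory.lintegral_eq_lmarginal_univ y,
          deun_lmarg_one μ Pap hPap p hpmeas hpnonneg hpdep hpnorm Finset.univ y]
    _ < ⊤ := by
        rw [mul_one]
        exact ENNReal.prod_lt_top fun i _ => ENNReal.ofReal_lt_top

end Deun

end Aux

/-- Backward-induction computation of the expected utility of a
directed expected utility network: the recursion `v` eliminates one variable at
a time, `v k (c, ·)` depends only on the coordinates `{j | j < k}` (so `v 0 (c, ·)`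
is constant), and the overall expected utility equals `∑ c, w c * v 0 c y`. -/
theorem deun_backward_induction {n : ℕ} {α : Fin n → Type*}
    [∀ i, MeasurableSpace (α i)]
    (μ : ∀ i, Measure (α i)) [∀ i, SigmaFinite (μ i)]
    (Pap Pau : Fin n → Finset (Fin n))
    (hPap : ∀ i : Fin n, ∀ j ∈ Pap i, j < i)
    (hPau : ∀ i : Fin n, ∀ j ∈ Pau i, j < i)
    -- the conditional densities `p i`
    (p : Fin n → (∀ j, α j) → ℝ)
    (hpmeas : ∀ i, Measurable (p i))
    (hpnonneg : ∀ i y, 0 ≤ p i y)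
    (hpdep : ∀ (i : Fin n) (y y' : ∀ j, α j),
      (∀ j : Fin n, (j = i ∨ j ∈ Pap i) → y j = y' j) → p i y = p i y')
    (hpnorm : ∀ (i : Fin n) (y : ∀ j, α j),
      ∫ x, p i (Function.update y i x) ∂(μ i) = 1)
    -- the utility weights and single-attribute factors
    (w : (Fin n → Bool) → ℝ)
    (g : ∀ i : Fin n, (Fin n → Bool) → α i → ℝ)
    (hgbdd : ∀ (i : Fin n) (c : Fin n → Bool), ∃ M, ∀ x, |g i c x| ≤ M)
    (hgmeas : ∀ (i : Fin n) (c : Fin n → Bool), Measurable (g i c))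
    (hgdep : ∀ (i : Fin n) (c c' : Fin n → Bool),
      (∀ j : Fin n, (j = i ∨ j ∈ Pau i) → c j = c' j) → g i c = g i c')
    -- the backward-induction recursion
    (v : ℕ → (Fin n → Bool) → (∀ j, α j) → ℝ)
    (hvtop : ∀ (c : Fin n → Bool) (y : ∀ j, α j), v n c y = 1)
    (hvrec : ∀ (k : Fin n) (c : Fin n → Bool) (y : ∀ j, α j),
      v (k : ℕ) c y =
        ∫ x, v ((k : ℕ) + 1) c (Function.update y k x) * g k c x *
          p k (Function.update y k x) ∂(μ k)) :
    -- `v k (c, ·)` depends only on the coordinates in `{j | j < k}`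
    (∀ k : ℕ, k ≤ n → ∀ (c : Fin n → Bool) (y y' : ∀ j, α j),
      (∀ j : Fin n, (j : ℕ) < k → y j = y' j) → v k c y = v k c y') ∧
    -- in particular `v 0 (c, ·)` is constant
    (∀ (c : Fin n → Bool) (y y' : ∀ j, α j), v 0 c y = v 0 c y') ∧
    -- and the recursion computes the overall expected utility
    (∀ y : ∀ j, α j,
      ∫ y', (∑ c : Fin n → Bool, w c * ∏ i : Fin n, g i c (y' i)) *
          (∏ i : Fin n, p i y') ∂(Measure.pi μ)
        = ∑ c : Fin n → Bool, w c * v 0 c y) := by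
  classical
  -- Part 1: `v k (c, ·)` depends only on the coordinates below `k`
  have part1 : ∀ d k : ℕ, k + d = n → ∀ (c : Fin n → Bool) (y y' : ∀ j, α j),
      (∀ j : Fin n, (j : ℕ) < k → y j = y' j) → v k c y = v k c y' := by
    intro d
    induction d with
    | zero =>
      intro k hk c y y' _
      have hkn : k = n := by omega
      subst hkn
      rw [hvtop, hvtop]
    | succ d ih =>
      intro k hk c y y' hagree
      have hkn : k < n := by omega
      have h1 : v k c y = ∫ x, v (k + 1) c (Function.update y ⟨k, hkn⟩ x) * g ⟨k, hkn⟩ c x *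
          p ⟨k, hkn⟩ (Function.update y ⟨k, hkn⟩ x) ∂μ ⟨k, hkn⟩ := hvrec ⟨k, hkn⟩ c y
      have h2 : v k c y' = ∫ x, v (k + 1) c (Function.update y' ⟨k, hkn⟩ x) * g ⟨k, hkn⟩ c x *
          p ⟨k, hkn⟩ (Function.update y' ⟨k, hkn⟩ x) ∂μ ⟨k, hkn⟩ := hvrec ⟨k, hkn⟩ c y'
      rw [h1, h2]
      have hfun : (fun x => v (k + 1) c (Function.update y ⟨k, hkn⟩ x) * g ⟨k, hkn⟩ c x *
            p ⟨k, hkn⟩ (Function.update y ⟨k, hkn⟩ x))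
          = fun x => v (k + 1) c (Function.update y' ⟨k, hkn⟩ x) * g ⟨k, hkn⟩ c x *
            p ⟨k, hkn⟩ (Function.update y' ⟨k, hkn⟩ x) := by
        funext x
        have hv : v (k + 1) c (Function.update y ⟨k, hkn⟩ x)
            = v (k + 1) c (Function.update y' ⟨k, hkn⟩ x) := by
          refine ih (k + 1) (by omega) c _ _ fun j hj => ?_
          by_cases hjk : j = (⟨k, hkn⟩ : Fin n)
          · subst hjk; simp
          · rw [Function.update_of_ne hjk, Function.update_of_ne hjk]
            refine hagree j ?_
            have : (j : ℕ) ≠ k := fun h => hjk (Fin.ext h)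
            omega
        have hp : p ⟨k, hkn⟩ (Function.update y ⟨k, hkn⟩ x)
            = p ⟨k, hkn⟩ (Function.update y' ⟨k, hkn⟩ x) := by
          refine hpdep _ _ _ fun j hj => ?_
          rcases hj with rfl | hj
          · simp
          · have hjk : (j : ℕ) < k := hPap _ j hj
            have hne : j ≠ (⟨k, hkn⟩ : Fin n) := by
              intro h
              rw [h] at hjk
              simp at hjk
            rw [Function.update_of_ne hne, Function.update_of_ne hne]
            exact hagree j hjk
        rw [hv, hp]
      rw [hfun]
  -- Part 3 core: `v k c y` is the marginal over the coordinates `≥ k`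
  have key : ∀ d k : ℕ, k + d = n → ∀ (c : Fin n → Bool) (y : ∀ j, α j),
      v k c y = bmarg μ (Finset.filter (fun j : Fin n => k ≤ (j : ℕ)) Finset.univ)
        (fun z => ∏ i ∈ Finset.filter (fun j : Fin n => k ≤ (j : ℕ)) Finset.univ,
          (g i c (z i) * p i z)) y := by
    intro d
    induction d with
    | zero =>
      intro k hk c y
      have hkn : k = n := by omega
      have hs : Finset.filter (fun j : Fin n => k ≤ (j : ℕ)) Finset.univ = ∅ := by
        refine Finset.filter_false_of_mem fun j _ => ?_
        exact Nat.not_le.mpr (hkn ▸ j.isLt)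
      rw [hs, bmarg_empty, Finset.prod_empty, hkn, hvtop]
    | succ d ih =>
      intro k hk c y
      have hkn : k < n := by omega
      set K : Fin n := ⟨k, hkn⟩ with hKdef
      set s' : Finset (Fin n) := Finset.filter (fun j : Fin n => k + 1 ≤ (j : ℕ)) Finset.univ
        with hs'def
      have hss : Finset.filter (fun j : Fin n => k ≤ (j : ℕ)) Finset.univ = insert K s' := by
        ext j
        simp only [hs'def, Finset.mem_filter, Finset.mem_insert, Finset.mem_univ, true_and]
        constructor
        · intro h
          rcases eq_or_lt_of_le h with h | h
          · left; exact Fin.ext h.symm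
          · right; omega
        · rintro (rfl | h)
          · exact Nat.le_of_eq rfl
          · omega
      have hKnot : K ∉ s' := by
        simp [hs'def, hKdef]
      rw [hss]
      rw [bmarg_insert μ hKnot
        (fun z => ∏ i ∈ insert K s', (g i c (z i) * p i z)) y
        (deun_integrable μ Pap hPap p hpmeas hpnonneg hpdep hpnorm
          (fun i => g i c) (fun i => hgbdd i c) (fun i => hgmeas i c) (insert K s') y)]
      have hstep : ∀ x : α K,
          bmarg μ s' (fun z => ∏ i ∈ insert K s', (g i c (z i) * p i z))
            (Function.update y K x)
          = (g K c x * p K (Function.update y K x)) *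
              v (k + 1) c (Function.update y K x) := by
        intro x
        have hinner : (fun z : ∀ i : s', α i =>
              ∏ i ∈ insert K s',
                (g i c (Function.updateFinset (Function.update y K x) s' z i) *
                  p i (Function.updateFinset (Function.update y K x) s' z)))
            = fun z : ∀ i : s', α i =>
              (g K c x * p K (Function.update y K x)) *
              ∏ i ∈ s',
                (g i c (Function.updateFinset (Function.update y K x) s' z i) *
                  p i (Function.updateFinset (Function.update y K x) s' z)) := by
          funext z
          rw [Finset.prod_insert hKnot]
          congr 2
          · simp [Function.updateFinset, hKnot]
          · refine hpdep K _ _ fun j hj => ?_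
            have hnot : j ∉ s' := by
              rcases hj with rfl | hj
              · exact hKnot
              · have : (j : ℕ) < k := hPap K j hj
                simp only [hs'def, Finset.mem_filter, Finset.mem_univ, true_and]
                omega
            simp [Function.updateFinset, hnot]
        rw [bmarg, hinner, integral_const_mul]
        congr 1
        exact (ih (k + 1) (by omega) c (Function.update y K x)).symm
      have h1 : v k c y = ∫ x, v (k + 1) c (Function.update y K x) * g K c x *
          p K (Function.update y K x) ∂μ K := hvrec K c y
      rw [h1]
      have hfun2 : (fun x : α K => v (k + 1) c (Function.update y K x) * g K c x *
            p K (Function.update y K x))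
          = fun x : α K => bmarg μ s'
              (fun z => ∏ i ∈ insert K s', (g i c (z i) * p i z)) (Function.update y K x) := by
        funext x
        rw [hstep x]
        ring
      rw [hfun2]
  refine ⟨fun k hk c y y' h => part1 (n - k) k (by omega) c y y' h,
    fun c y y' => part1 n 0 (by omega) c y y' (fun j hj => absurd hj (Nat.not_lt_zero _)), ?_⟩
  intro y
  have huniv : Finset.filter (fun j : Fin n => 0 ≤ (j : ℕ)) Finset.univ = Finset.univ :=
    Finset.filter_true_of_mem fun j _ => Nat.zero_le _
  have hv0 : ∀ c : Fin n → Bool,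
      v 0 c y = ∫ z, ∏ i ∈ Finset.univ, (g i c (z i) * p i z) ∂Measure.pi μ := by
    intro c
    have hk := key n 0 (by omega) c y
    rw [huniv] at hk
    rw [hk, bmarg_univ]
  have hsplit : (fun y' => (∑ c : Fin n → Bool, w c * ∏ i : Fin n, g i c (y' i)) *
        ∏ i : Fin n, p i y')
      = fun y' => ∑ c : Fin n → Bool, w c * ∏ i ∈ Finset.univ, (g i c (y' i) * p i y') := by
    funext y'
    rw [Finset.sum_mul]
    refine Finset.sum_congr rfl fun c _ => ?_
    rw [mul_assoc, ← Finset.prod_mul_distrib]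
  rw [hsplit, integral_finset_sum]
  · refine Finset.sum_congr rfl fun c _ => ?_
    rw [integral_const_mul, hv0 c]
  · intro c _
    exact ((deun_integrable_pi μ Pap hPap p hpmeas hpnonneg hpdep hpnorm (fun i => g i c)
      (fun i => hgbdd i c) (fun i => hgmeas i c) y).const_mul (w c))
end

section
/- Let i₀ : Fin n and Π ⊆ Fin n with i₀ ∉ Π. Let F Q : (∀ j, α j) → ℝ be bounded measurable functions depending only on the coordinates in Fin n \ {i₀}, with Q nonnegative; let g : α i₀ → ℝ be bounded measurable; and let p : (∀ j, α j) → ℝ be nonnegative measurable, depending only on the coordinates in {i₀} ∪ Π, with ∫ p (y[i₀ := x]) dμ i₀ (x) = 1 for every y. Assume the product p · Q is μ-integrable. Then ∫ F y · g (y i₀) · p y · Q y dμ(y) = ∫ F y · ḡ y · p y · Q y dμ(y), where ḡ y = ∫ g x · p (y[i₀ := x]) dμ i₀ (x). (This is the single-variable marginalization step: the expected value of a single-attribute utility factor against its conditional density may be absorbed before integrating the remaining variables.) -/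
open MeasureTheory

/-- The single-variable marginalization step: the expected value of a
single-attribute utility factor against its conditional density may be absorbed
before integrating the remaining variables. -/
theorem single_variable_marginalization {n : ℕ} {α : Fin n → Type*}
    [∀ i, MeasurableSpace (α i)]
    (μ : ∀ i, Measure (α i)) [∀ i, SigmaFinite (μ i)]
    (i₀ : Fin n) (Pa : Finset (Fin n)) (hi₀ : i₀ ∉ Pa)
    (F Q : (∀ j, α j) → ℝ)
    (hFmeas : Measurable F) (hFbdd : ∃ M, ∀ y, |F y| ≤ M)
    (hFdep : ∀ y y' : ∀ j, α j, (∀ j : Fin n, j ≠ i₀ → y j = y' j) → F y = F y')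
    (hQmeas : Measurable Q) (hQbdd : ∃ M, ∀ y, |Q y| ≤ M)
    (hQnonneg : ∀ y, 0 ≤ Q y)
    (hQdep : ∀ y y' : ∀ j, α j, (∀ j : Fin n, j ≠ i₀ → y j = y' j) → Q y = Q y')
    (g : α i₀ → ℝ) (hgmeas : Measurable g) (hgbdd : ∃ M, ∀ x, |g x| ≤ M)
    (p : (∀ j, α j) → ℝ) (hpmeas : Measurable p) (hpnonneg : ∀ y, 0 ≤ p y)
    (hpdep : ∀ y y' : ∀ j, α j,
      (∀ j : Fin n, (j = i₀ ∨ j ∈ Pa) → y j = y' j) → p y = p y')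
    (hpnorm : ∀ y : ∀ j, α j, ∫ x, p (Function.update y i₀ x) ∂(μ i₀) = 1)
    (hint : Integrable (fun y => p y * Q y) (Measure.pi μ)) :
    ∫ y, F y * g (y i₀) * p y * Q y ∂(Measure.pi μ)
      = ∫ y, F y * (∫ x, g x * p (Function.update y i₀ x) ∂(μ i₀)) * p y * Q y
          ∂(Measure.pi μ) := by
  classical
  by_cases hne : Nonempty (∀ j, α j)
  swap
  · rw [not_nonempty_iff] at hne
    simp [integral_of_isEmpty]
  -- pick a base point
  obtain ⟨y₀⟩ := hne
  have x₀ : α i₀ := y₀ i₀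
  obtain ⟨MF, hMF⟩ := hFbdd
  obtain ⟨Mg, hMg⟩ := hgbdd
  have hMg0 : 0 ≤ Mg := le_trans (abs_nonneg _) (hMg x₀)
  have hMF0 : 0 ≤ MF := le_trans (abs_nonneg _) (hMF y₀)
  -- the splitting equivalence
  letI : Unique {j : Fin n // ¬ j ≠ i₀} :=
    ⟨⟨⟨i₀, not_not_intro rfl⟩⟩, fun j => Subtype.ext (not_not.mp j.2)⟩
  set e2 : (∀ j : {j : Fin n // ¬ j ≠ i₀}, α j.1) ≃ᵐ α i₀ :=
    MeasurableEquiv.piUnique (fun j : {j : Fin n // ¬ j ≠ i₀} => α j.1) with he2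
  set T : (∀ j, α j) ≃ᵐ (∀ j : {j : Fin n // j ≠ i₀}, α j.1) × α i₀ :=
    (MeasurableEquiv.piEquivPiSubtypeProd α fun j => j ≠ i₀).trans
      ((MeasurableEquiv.refl _).prodCongr e2) with hTdef
  set π' : Measure (∀ j : {j : Fin n // j ≠ i₀}, α j.1) :=
    Measure.pi fun j : {j : Fin n // j ≠ i₀} => μ j.1 with hπ'
  have hT : MeasurePreserving T (Measure.pi μ) (π'.prod (μ i₀)) :=
    ((MeasurePreserving.id _).prod (measurePreserving_piUnique _)).comp
      (measurePreserving_piEquivPiSubtypeProd μ _)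
  have hev : ∀ z x (j : Fin n) (h : j ≠ i₀), T.symm (z, x) j = z ⟨j, h⟩ := by
    intro z x j h
    simp [hTdef, he2, MeasurableEquiv.trans, MeasurableEquiv.prodCongr,
      MeasurableEquiv.symm, MeasurableEquiv.piEquivPiSubtypeProd,
      MeasurableEquiv.piUnique, Equiv.piEquivPiSubtypeProd_symm_apply,
      Equiv.prodCongr, Equiv.piUnique, uniqueElim]
    simp [h]
  have hev0 : ∀ z x, T.symm (z, x) i₀ = x := by
    intro z x
    simp [hTdef, he2, MeasurableEquiv.trans, MeasurableEquiv.prodCongr,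
      MeasurableEquiv.symm, MeasurableEquiv.piEquivPiSubtypeProd,
      MeasurableEquiv.piUnique, Equiv.piEquivPiSubtypeProd_symm_apply,
      Equiv.prodCongr, Equiv.piUnique, uniqueElim]
  have hupd : ∀ z (x x' : α i₀),
      T.symm (z, x) = Function.update (T.symm (z, x')) i₀ x := by
    intro z x x'
    funext j
    by_cases h : j = i₀
    · subst h; rw [hev0, Function.update_self]
    · rw [Function.update_of_ne h, hev _ _ _ h, hev _ _ _ h]
  -- integrability of the conditional density slices
  have hpint : ∀ y, Integrable (fun x => p (Function.update y i₀ x)) (μ i₀) := by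
    intro y
    by_contra h
    have := hpnorm y
    rw [integral_undef h] at this
    norm_num at this
  have hgpint : ∀ y, Integrable (fun x => g x * p (Function.update y i₀ x)) (μ i₀) :=
    fun y => (hpint y).bdd_mul hgmeas.aestronglyMeasurable
      (c := Mg) (Filter.Eventually.of_forall fun x => by simpa [Real.norm_eq_abs] using hMg x)
  -- the averaged factor is bounded
  have hgbar_bdd : ∀ y, |∫ x, g x * p (Function.update y i₀ x) ∂(μ i₀)| ≤ Mg := by
    intro y
    have h1 : |∫ x, g x * p (Function.update y i₀ x) ∂(μ i₀)|
        ≤ ∫ x, |g x * p (Function.update y i₀ x)| ∂(μ i₀) := by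
      simpa only [Real.norm_eq_abs] using
        norm_integral_le_integral_norm (fun x => g x * p (Function.update y i₀ x)) (μ := μ i₀)
    refine h1.trans ?_
    have h2 : ∫ x, |g x * p (Function.update y i₀ x)| ∂(μ i₀)
        ≤ ∫ x, Mg * p (Function.update y i₀ x) ∂(μ i₀) := by
      refine integral_mono (hgpint y).abs ((hpint y).const_mul Mg) fun x => ?_
      rw [abs_mul, abs_of_nonneg (hpnonneg _)]
      exact mul_le_mul_of_nonneg_right (hMg x) (hpnonneg _)
    refine h2.trans ?_
    rw [integral_const_mul, hpnorm y, mul_one]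
  -- the averaged factor is strongly measurable
  have hgbar_meas : StronglyMeasurable
      (fun y : ∀ j, α j => ∫ x, g x * p (Function.update y i₀ x) ∂(μ i₀)) := by
    have hm : StronglyMeasurable
        (fun q : (∀ j, α j) × α i₀ => g q.2 * p (Function.update q.1 i₀ q.2)) :=
      ((hgmeas.comp measurable_snd).mul (hpmeas.comp measurable_update')).stronglyMeasurable
    exact hm.integral_prod_right'
  -- integrability of both integrands
  have hf1 : Integrable (fun y => F y * g (y i₀) * p y * Q y) (Measure.pi μ) := by
    have h := hint.bdd_mul
      ((hFmeas.mul (hgmeas.comp (measurable_pi_apply i₀))).aestronglyMeasurable)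
      (c := MF * Mg) (Filter.Eventually.of_forall fun y => by
        rw [Pi.mul_apply, Function.comp_apply, Real.norm_eq_abs, abs_mul]
        exact mul_le_mul (hMF y) (hMg _) (abs_nonneg _) hMF0)
    simpa only [Pi.mul_apply, Function.comp_apply, mul_assoc] using h
  have hf2 : Integrable (fun y =>
      F y * (∫ x, g x * p (Function.update y i₀ x) ∂(μ i₀)) * p y * Q y) (Measure.pi μ) := by
    have h := hint.bdd_mul
      ((hFmeas.aestronglyMeasurable).mul hgbar_meas.aestronglyMeasurable)
      (c := MF * Mg) (Filter.Eventually.of_forall fun y => by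
        rw [Pi.mul_apply, Real.norm_eq_abs, abs_mul]
        exact mul_le_mul (hMF y) (hgbar_bdd y) (abs_nonneg _) hMF0)
    simpa only [Pi.mul_apply, mul_assoc] using h
  -- transport both sides through the splitting
  have hTs : MeasurePreserving (⇑T.symm) (π'.prod (μ i₀)) (Measure.pi μ) := hT.symm T
  have key : ∀ f : (∀ j, α j) → ℝ, Integrable f (Measure.pi μ) →
      ∫ y, f y ∂(Measure.pi μ) = ∫ z, ∫ x, f (T.symm (z, x)) ∂(μ i₀) ∂π' := by
    intro f hf
    rw [← hTs.integral_comp T.symm.measurableEmbedding f]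
    exact integral_prod _ ((hTs.integrable_comp_emb T.symm.measurableEmbedding).mpr hf)
  rw [key _ hf1, key _ hf2]
  refine integral_congr_ae (Filter.Eventually.of_forall fun z => ?_)
  have hF' : ∀ x, F (T.symm (z, x)) = F (T.symm (z, x₀)) := fun x =>
    hFdep _ _ fun j h => by rw [hev z x j h, hev z x₀ j h]
  have hQ' : ∀ x, Q (T.symm (z, x)) = Q (T.symm (z, x₀)) := fun x =>
    hQdep _ _ fun j h => by rw [hev z x j h, hev z x₀ j h]
  have hp' : ∀ x, p (T.symm (z, x)) = p (Function.update (T.symm (z, x₀)) i₀ x) := fun x => by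
    rw [hupd z x x₀]
  have hupd2 : ∀ (x x' : α i₀),
      Function.update (T.symm (z, x)) i₀ x' = Function.update (T.symm (z, x₀)) i₀ x' := by
    intro x x'
    rw [hupd z x x₀, Function.update_idem]
  have L : ∫ x, F (T.symm (z, x)) * g (T.symm (z, x) i₀) * p (T.symm (z, x)) * Q (T.symm (z, x))
        ∂(μ i₀)
      = (F (T.symm (z, x₀)) * Q (T.symm (z, x₀)))
          * ∫ x, g x * p (Function.update (T.symm (z, x₀)) i₀ x) ∂(μ i₀) := by
    rw [← integral_const_mul]
    refine integral_congr_ae (Filter.Eventually.of_forall fun x => ?_)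
    simp only []
    rw [hF' x, hQ' x, hp' x, hev0 z x]
    ring
  have R : ∫ x, F (T.symm (z, x))
        * (∫ x', g x' * p (Function.update (T.symm (z, x)) i₀ x') ∂(μ i₀))
        * p (T.symm (z, x)) * Q (T.symm (z, x)) ∂(μ i₀)
      = (F (T.symm (z, x₀)) * Q (T.symm (z, x₀)))
          * ∫ x, g x * p (Function.update (T.symm (z, x₀)) i₀ x) ∂(μ i₀) := by
    have hgbar' : ∀ x, (∫ x', g x' * p (Function.update (T.symm (z, x)) i₀ x') ∂(μ i₀))
        = ∫ x', g x' * p (Function.update (T.symm (z, x₀)) i₀ x') ∂(μ i₀) := by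
      intro x
      refine integral_congr_ae (Filter.Eventually.of_forall fun x' => ?_)
      simp only []
      rw [hupd2 x x']
    have step : ∫ x, F (T.symm (z, x))
          * (∫ x', g x' * p (Function.update (T.symm (z, x)) i₀ x') ∂(μ i₀))
          * p (T.symm (z, x)) * Q (T.symm (z, x)) ∂(μ i₀)
        = ∫ x, (F (T.symm (z, x₀)) * Q (T.symm (z, x₀))
            * (∫ x', g x' * p (Function.update (T.symm (z, x₀)) i₀ x') ∂(μ i₀)))
            * p (Function.update (T.symm (z, x₀)) i₀ x) ∂(μ i₀) := by
      refine integral_congr_ae (Filter.Eventually.of_forall fun x => ?_)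
      simp only []
      rw [hF' x, hQ' x, hp' x, hgbar' x]
      ring
    rw [step, integral_const_mul, hpnorm (T.symm (z, x₀)), mul_one]
  simp only []
  rw [L, R]
end

section
/- Assume each μ i is a finite measure. Let m : ℕ, C : Fin m → Finset (Fin n), and let l q : Fin m with l ≠ q. Let S ⊆ (C l) ∩ (C q) and set T := C l \ S; assume T is disjoint from C j for every j ≠ l. For each j : Fin m let Φ_j : (∀ i, α i) → ℝ be a bounded nonnegative measurable function depending only on the coordinates in C j, let K be a finite type, and let Ψ_j : K → (∀ i, α i) → ℝ be such that each Ψ_j c is bounded, measurable, and depends only on the coordinates in C j. Then, as functions of y: ∫_T [ (∏_j Φ_j) · Σ_{c ∈ K} ∏_j Ψ_j c ] = (∏_{j ≠ l} Φ_j) · Σ_{c ∈ K} [ Ψ_q c · (∫_T (Φ_l · Ψ_l c)) · ∏_{j ≠ l, j ≠ q} Ψ_j c ]. That is, absorbing the leaf clique l into its parent q — replacing Ψ_q c by Ψ_q c · ∫_T (Φ_l · Ψ_l c) and removing clique l — leaves the partial integral over T of the product of the probability potentials times the total utility potential unchanged. -/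
open MeasureTheory

/-- The partial integral `∫_T f`: the marginal integral of `f` over the
coordinates in `T`, as a function of the remaining coordinates. -/
noncomputable def partialIntegral {n : ℕ} {α : Fin n → Type*}
    [∀ i, MeasurableSpace (α i)] (μ : ∀ i, Measure (α i))
    (T : Finset (Fin n)) (f : (∀ i, α i) → ℝ) : (∀ i, α i) → ℝ :=
  fun y => ∫ x : ∀ i : {i // i ∈ T}, α i.val,
    f (fun j => if h : j ∈ T then x ⟨j, h⟩ else y j)
      ∂(Measure.pi fun i : {i // i ∈ T} => μ i.val)

/-- Absorption of a leaf clique `l` into its parent `q` — replacing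
`Ψ q c` by `Ψ q c ⬝ ∫_T (Φ l ⬝ Ψ l c)` and removing clique `l` — leaves the
partial integral over the residual `T` of the product of the probability
potentials times the total utility potential unchanged. -/
theorem clique_absorption {n m : ℕ} {α : Fin n → Type*}
    [∀ i, MeasurableSpace (α i)]
    (μ : ∀ i, Measure (α i)) [∀ i, SigmaFinite (μ i)] [∀ i, IsFiniteMeasure (μ i)]
    (C : Fin m → Finset (Fin n)) (l q : Fin m) (hlq : l ≠ q)
    (S : Finset (Fin n)) (hS : S ⊆ C l ∩ C q)
    (T : Finset (Fin n)) (hT : T = C l \ S)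
    (hdisj : ∀ j : Fin m, j ≠ l → Disjoint T (C j))
    (Φ : Fin m → (∀ i, α i) → ℝ)
    (hΦmeas : ∀ j, Measurable (Φ j))
    (hΦnonneg : ∀ j y, 0 ≤ Φ j y)
    (hΦbdd : ∀ j, ∃ M, ∀ y, |Φ j y| ≤ M)
    (hΦdep : ∀ (j : Fin m) (y y' : ∀ i, α i),
      (∀ i ∈ C j, y i = y' i) → Φ j y = Φ j y')
    (K : Type) [Fintype K]
    (Ψ : Fin m → K → (∀ i, α i) → ℝ)
    (hΨmeas : ∀ j c, Measurable (Ψ j c))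
    (hΨbdd : ∀ j c, ∃ M, ∀ y, |Ψ j c y| ≤ M)
    (hΨdep : ∀ (j : Fin m) (c : K) (y y' : ∀ i, α i),
      (∀ i ∈ C j, y i = y' i) → Ψ j c y = Ψ j c y') :
    ∀ y : ∀ i, α i,
      partialIntegral μ T
          (fun y' => (∏ j, Φ j y') * ∑ c : K, ∏ j, Ψ j c y') y
        = (∏ j ∈ Finset.univ.erase l, Φ j y) *
            ∑ c : K, (Ψ q c y *
              partialIntegral μ T (fun y' => Φ l y' * Ψ l c y') y *
              ∏ j ∈ (Finset.univ.erase l).erase q, Ψ j c y) := by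

  intro y
  classical
  simp only [partialIntegral]
  have hzmeas : Measurable (fun (x : ∀ i : {i // i ∈ T}, α i.val) (j : Fin n) =>
      if h : j ∈ T then x ⟨j, h⟩ else y j) := by
    apply measurable_pi_lambda
    intro j
    by_cases h : j ∈ T
    · simpa only [dif_pos h] using measurable_pi_apply (⟨j, h⟩ : {i // i ∈ T})
    · simpa only [dif_neg h] using (measurable_const :
        Measurable fun _ : ∀ i : {i // i ∈ T}, α i.val => y j)
  set z : (∀ i : {i // i ∈ T}, α i.val) → (∀ i, α i) :=
    fun x j => if h : j ∈ T then x ⟨j, h⟩ else y j with hzdef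
  have hzoff : ∀ x j, j ∉ T → z x j = y j := fun x j hj => dif_neg hj
  have hΦz : ∀ (x) (j), j ∈ Finset.univ.erase l → Φ j (z x) = Φ j y := by
    intro x j hj
    apply hΦdep
    intro i hi
    exact hzoff x i fun hiT =>
      (Finset.disjoint_left.mp (hdisj j (Finset.ne_of_mem_erase hj)) hiT hi)
  have hΨz : ∀ (x) (c : K) (j), j ∈ Finset.univ.erase l → Ψ j c (z x) = Ψ j c y := by
    intro x c j hj
    apply hΨdep
    intro i hi
    exact hzoff x i fun hiT =>
      (Finset.disjoint_left.mp (hdisj j (Finset.ne_of_mem_erase hj)) hiT hi)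
  have hint : ∀ c : K, Integrable (fun x => Φ l (z x) * Ψ l c (z x))
      (Measure.pi fun i : {i // i ∈ T} => μ i.val) := by
    intro c
    obtain ⟨M1, hM1⟩ := hΦbdd l
    obtain ⟨M2, hM2⟩ := hΨbdd l c
    refine Integrable.mono' (integrable_const (M1 * M2))
      (((hΦmeas l).comp hzmeas).mul ((hΨmeas l c).comp hzmeas)).aestronglyMeasurable
      (ae_of_all _ fun x => ?_)
    rw [Real.norm_eq_abs, abs_mul]
    exact mul_le_mul (hM1 (z x)) (hM2 (z x)) (abs_nonneg _) ((abs_nonneg (Φ l (z x))).trans (hM1 (z x)))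
  have hq : q ∈ Finset.univ.erase l := Finset.mem_erase.mpr ⟨Ne.symm hlq, Finset.mem_univ q⟩
  have key : (fun x => (∏ j, Φ j (z x)) * ∑ c : K, ∏ j, Ψ j c (z x))
      = fun x => ∑ c : K, (Φ l (z x) * Ψ l c (z x)) *
          ((∏ j ∈ Finset.univ.erase l, Φ j y) *
            (Ψ q c y * ∏ j ∈ (Finset.univ.erase l).erase q, Ψ j c y)) := by
    funext x
    rw [Finset.mul_sum]
    refine Finset.sum_congr rfl fun c _ => ?_
    rw [← Finset.mul_prod_erase Finset.univ (fun j => Φ j (z x)) (Finset.mem_univ l),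
        ← Finset.mul_prod_erase Finset.univ (fun j => Ψ j c (z x)) (Finset.mem_univ l),
        Finset.prod_congr rfl (fun j hj => hΦz x j hj),
        Finset.prod_congr rfl (fun j hj => hΨz x c j hj),
        ← Finset.mul_prod_erase (Finset.univ.erase l) (fun j => Ψ j c y) hq]
    ring
  rw [key, integral_finset_sum _ (fun c _ => (hint c).mul_const _)]
  simp only [integral_mul_const]
  rw [Finset.mul_sum]
  exact Finset.sum_congr rfl fun c _ => by ring
end

section
/- Assume each μ i is a finite measure. Let C : Fin m → Finset (Fin n) with ⋃_j C j = Finset.univ, together with a map ι assigning to each j ≠ 0 an index ι j < j such that the running intersection property holds: C j ∩ (⋃_{k < j} C k) ⊆ C (ι j) for every j ≠ 0. Set S j := C j ∩ ⋃_{k < j} C k and R j := C j \ S j for j ≠ 0, and R 0 := C 0 (so the residuals R j partition Fin n). For each j let Φ_j : (∀ i, α i) → ℝ be a bounded nonnegative measurable function depending only on the coordinates in C j; let K be a finite type, w : K → ℝ, and Ψ_j : K → (∀ i, α i) → ℝ with each Ψ_j c bounded, measurable, and depending only on the coordinates in C j. Define the absorption recursion: starting from the family (Ψ_j)_j, for j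 = m−1 down to j = 1 in decreasing order, replace the component at index ι j by the function c ↦ (current Ψ_{ι j} c) · ∫_{R j} (Φ_j · (current Ψ_j c)) and discard component j; let Ψ⁰ : K → (∀ i, α i) → ℝ denote the resulting component at index 0. Then for every y: Σ_{c ∈ K} w c · (∫_{C 0} (Φ_0 · Ψ⁰ c)) y = ∫ (∏_j Φ_j y') · (Σ_{c ∈ K} w c · ∏_j Ψ_j c y') dμ(y'). In other words, sequential absorption of the cliques along the junction tree computes the overall expected utility. -/
open MeasureTheory

section Helpers

variable {n : ℕ} {α : Fin n → Type*} [∀ i, MeasurableSpace (α i)]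
  (μ : ∀ i, Measure (α i))

theorem partialIntegral_def (T : Finset (Fin n)) (f : (∀ i, α i) → ℝ) (y : ∀ i, α i) :
    partialIntegral μ T f y =
      ∫ x : ∀ i : {i // i ∈ T}, α i.val, f (Function.updateFinset y T x)
        ∂(Measure.pi fun i : {i // i ∈ T} => μ i.val) := rfl

/-- boundedness helper -/
theorem integrable_of_bounded' {X : Type*} [MeasurableSpace X] (ν : Measure X)
    [IsFiniteMeasure ν] {f : X → ℝ} (hf : Measurable f) {M : ℝ} (hM : ∀ x, |f x| ≤ M) :
    Integrable f ν :=
  Integrable.mono' (integrable_const M) hf.aestronglyMeasurable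
    (Filter.Eventually.of_forall fun x => by simpa using hM x)

theorem measurable_partialIntegral [∀ i, SigmaFinite (μ i)] {T : Finset (Fin n)}
    {f : (∀ i, α i) → ℝ} (hf : Measurable f) :
    Measurable (partialIntegral μ T f) := by
  have hm : Measurable fun p : (∀ i, α i) × (∀ i : {i // i ∈ T}, α i.val) =>
      f (Function.updateFinset p.1 T p.2) := by
    apply hf.comp
    rw [measurable_pi_iff]; intro j
    by_cases h : j ∈ T
    · simp only [Function.updateFinset, dif_pos h]; exact (measurable_pi_apply _).comp measurable_snd
    · simp only [Function.updateFinset, dif_neg h]; exact (measurable_pi_apply _).comp measurable_fst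
  exact hm.stronglyMeasurable.integral_prod_right'.measurable

theorem abs_partialIntegral_le [∀ i, IsFiniteMeasure (μ i)] {T : Finset (Fin n)}
    {f : (∀ i, α i) → ℝ} {M : ℝ} (hM : ∀ y, |f y| ≤ M) (y : ∀ i, α i) :
    |partialIntegral μ T f y| ≤
      M * ((Measure.pi fun i : {i // i ∈ T} => μ i.val) Set.univ).toReal := by
  rw [partialIntegral_def, ← Real.norm_eq_abs]
  exact norm_integral_le_of_norm_le_const
    (Filter.Eventually.of_forall fun x => by simpa using hM _)

theorem partialIntegral_congr_point {T : Finset (Fin n)} {f : (∀ i, α i) → ℝ}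
    {y y' : ∀ i, α i} (h : ∀ i ∉ T, y i = y' i) :
    partialIntegral μ T f y = partialIntegral μ T f y' := by
  unfold partialIntegral
  congr 1; funext x; congr 1; funext j
  by_cases hj : j ∈ T
  · simp [hj]
  · simp [hj, h j hj]

theorem partialIntegral_mul_left {T : Finset (Fin n)} {g h : (∀ i, α i) → ℝ}
    (hg : ∀ (x : ∀ i : {i // i ∈ T}, α i.val) (y : ∀ i, α i),
      g (Function.updateFinset y T x) = g y) (y : ∀ i, α i) :
    partialIntegral μ T (fun z => g z * h z) y = g y * partialIntegral μ T h y := by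
  simp_rw [partialIntegral_def, hg, integral_const_mul]

theorem partialIntegral_union [∀ i, SigmaFinite (μ i)] [∀ i, IsFiniteMeasure (μ i)]
    {s t : Finset (Fin n)} (hst : Disjoint s t)
    {f : (∀ i, α i) → ℝ} (hf : Measurable f) {M : ℝ} (hM : ∀ y, |f y| ≤ M) (y : ∀ i, α i) :
    partialIntegral μ (s ∪ t) f y = partialIntegral μ s (partialIntegral μ t f) y := by
  let e := MeasurableEquiv.piFinsetUnion α hst
  have hmp := measurePreserving_piFinsetUnion hst μ
  have hcomp : Measurable fun p : (∀ i : {i // i ∈ s}, α i.val) ×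
      (∀ i : {i // i ∈ t}, α i.val) => f (Function.updateFinset y (s ∪ t) (e p)) :=
    hf.comp (measurable_updateFinset.comp e.measurable)
  calc partialIntegral μ (s ∪ t) f y
      = ∫ z, f (Function.updateFinset y (s ∪ t) z)
          ∂(Measure.pi fun i : {i // i ∈ s ∪ t} => μ i.val) := rfl
    _ = ∫ p : (∀ i : {i // i ∈ s}, α i.val) × (∀ i : {i // i ∈ t}, α i.val),
          f (Function.updateFinset y (s ∪ t) (e p))
          ∂((Measure.pi fun i : {i // i ∈ s} => μ i.val).prod
            (Measure.pi fun i : {i // i ∈ t} => μ i.val)) :=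
        (hmp.integral_comp e.measurableEmbedding _).symm
    _ = ∫ x, ∫ z, f (Function.updateFinset y (s ∪ t) (e (x, z)))
          ∂(Measure.pi fun i : {i // i ∈ t} => μ i.val)
          ∂(Measure.pi fun i : {i // i ∈ s} => μ i.val) :=
        integral_prod _ (integrable_of_bounded' _ hcomp (fun p => hM _))
    _ = partialIntegral μ s (partialIntegral μ t f) y := by
        simp_rw [partialIntegral_def, Function.updateFinset_updateFinset hst]
        rfl

theorem partialIntegral_univ [∀ i, SigmaFinite (μ i)] {f : (∀ i, α i) → ℝ} (y : ∀ i, α i) :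
    partialIntegral μ Finset.univ f y = ∫ z, f z ∂(Measure.pi μ) := by
  let e : { j // j ∈ (Finset.univ : Finset (Fin n)) } ≃ Fin n :=
    Equiv.subtypeUnivEquiv (fun i => Finset.mem_univ i)
  have hmp := measurePreserving_piCongrLeft μ e
  calc partialIntegral μ Finset.univ f y
      = ∫ x, f (Function.updateFinset y Finset.univ x)
          ∂(Measure.pi fun i : {i // i ∈ (Finset.univ : Finset (Fin n))} => μ i.val) := rfl
    _ = ∫ x, (fun z => f (Function.updateFinset y Finset.univ
          ((MeasurableEquiv.piCongrLeft α e).symm z)))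
          ((MeasurableEquiv.piCongrLeft α e) x)
          ∂(Measure.pi fun i : {i // i ∈ (Finset.univ : Finset (Fin n))} => μ i.val) := by
        congr 1
    _ = ∫ z, f (Function.updateFinset y Finset.univ
          ((MeasurableEquiv.piCongrLeft α e).symm z)) ∂(Measure.pi μ) := by
        exact hmp.integral_comp' (fun z => f (Function.updateFinset y Finset.univ
          ((MeasurableEquiv.piCongrLeft α e).symm z)))
    _ = ∫ z, f z ∂(Measure.pi μ) := by
        congr 1; funext z; congr 1; funext j
        refine Function.updateFinset_univ_apply.trans ?_
        exact Equiv.piCongrLeft_symm_apply α e z ⟨j, Finset.mem_univ j⟩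

end Helpers

/-- `f` depends only on the coordinates in `U`. -/
def DepsOn {n : ℕ} {α : Fin n → Type*} (f : (∀ i, α i) → ℝ) (U : Finset (Fin n)) : Prop :=
  ∀ y y' : ∀ i, α i, (∀ i ∈ U, y i = y' i) → f y = f y'

set_option linter.unusedSectionVars false
section Deps

variable {n : ℕ} {α : Fin n → Type*} [∀ i, MeasurableSpace (α i)]

theorem DepsOn.mono {f : (∀ i, α i) → ℝ} {U V : Finset (Fin n)} (hf : DepsOn f U)
    (hUV : U ⊆ V) : DepsOn f V := fun y y' h => hf y y' fun i hi => h i (hUV hi)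

theorem DepsOn.mul {f g : (∀ i, α i) → ℝ} {U : Finset (Fin n)} (hf : DepsOn f U)
    (hg : DepsOn g U) : DepsOn (fun y => f y * g y) U :=
  fun y y' h => by simp only []; rw [hf y y' h, hg y y' h]

theorem depsOn_finset_prod {ι' : Type*} (s : Finset ι') (f : ι' → (∀ i, α i) → ℝ)
    {U : Finset (Fin n)} (h : ∀ j ∈ s, DepsOn (f j) U) :
    DepsOn (fun y => ∏ j ∈ s, f j y) U :=
  fun y y' hy => Finset.prod_congr rfl fun j hj => h j hj y y' hy

theorem DepsOn.updateFinset_eq {f : (∀ i, α i) → ℝ} {U T : Finset (Fin n)}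
    (hf : DepsOn f U) (hUT : Disjoint U T) (x : ∀ i : {i // i ∈ T}, α i.val)
    (y : ∀ i, α i) : f (Function.updateFinset y T x) = f y :=
  hf _ _ fun i hi => by
    have : i ∉ T := Finset.disjoint_left.mp hUT hi
    simp [Function.updateFinset, this]

theorem DepsOn.partialIntegral (μ : ∀ i, Measure (α i)) {f : (∀ i, α i) → ℝ}
    {U : Finset (Fin n)} (hf : DepsOn f U) (T : Finset (Fin n)) :
    DepsOn (partialIntegral μ T f) (U \ T) := by
  intro y y' h
  simp only [partialIntegral_def]
  congr 1; funext x
  apply hf; intro i hi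
  by_cases hiT : i ∈ T
  · simp [Function.updateFinset, hiT]
  · simp [Function.updateFinset, hiT, h i (Finset.mem_sdiff.mpr ⟨hi, hiT⟩)]

theorem exists_bound_mul {X : Type*} {f g : X → ℝ} (hf : ∃ M, ∀ y, |f y| ≤ M)
    (hg : ∃ M, ∀ y, |g y| ≤ M) : ∃ M, ∀ y, |f y * g y| ≤ M := by
  obtain ⟨M1, h1⟩ := hf; obtain ⟨M2, h2⟩ := hg
  refine ⟨max M1 0 * max M2 0, fun y => ?_⟩
  rw [abs_mul]
  exact mul_le_mul ((h1 y).trans (le_max_left _ _)) ((h2 y).trans (le_max_left _ _))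
    (abs_nonneg _) (le_max_right _ _)

theorem exists_bound_finset_prod {X : Type*} {ι' : Type*} (s : Finset ι') (f : ι' → X → ℝ)
    (h : ∀ j ∈ s, ∃ M, ∀ y, |f j y| ≤ M) :
    ∃ M, ∀ y, |∏ j ∈ s, f j y| ≤ M := by
  classical
  induction s using Finset.induction_on with
  | empty => exact ⟨1, by simp⟩
  | @insert a s ha ih =>
    obtain ⟨M1, h1⟩ := h a (Finset.mem_insert_self a s)
    obtain ⟨M2, h2⟩ := ih fun j hj => h j (Finset.mem_insert_of_mem hj)
    refine ⟨max M1 0 * max M2 0, fun y => ?_⟩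
    rw [Finset.prod_insert ha, abs_mul]
    exact mul_le_mul ((h1 y).trans (le_max_left _ _)) ((h2 y).trans (le_max_left _ _))
      (abs_nonneg _) (le_max_right _ _)

end Deps

/-- Sequential absorption of the cliques of a junction tree
(cliques `C j` with parents `ι j` satisfying the running intersection property,
residuals `R j`) computes the overall expected utility: the absorption recursion
`Θ` ends with a potential `Θ 1 0` at the root whose corner-weighted partial
integral over `C 0` equals the integral of the product of the probability
potentials times the total utility potential. -/
theorem junction_tree_absorption {n m : ℕ} {α : Fin n → Type*}
    [∀ i, MeasurableSpace (α i)]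
    (μ : ∀ i, Measure (α i)) [∀ i, SigmaFinite (μ i)] [∀ i, IsFiniteMeasure (μ i)]
    [NeZero m]
    (C : Fin m → Finset (Fin n))
    (hcover : ∀ i : Fin n, ∃ j : Fin m, i ∈ C j)
    (ι : Fin m → Fin m) (hι : ∀ j : Fin m, j ≠ 0 → ι j < j)
    -- running intersection property
    (hrip : ∀ j : Fin m, j ≠ 0 → ∀ v ∈ C j, (∃ k, k < j ∧ v ∈ C k) → v ∈ C (ι j))
    -- residuals `R j = C j \ S j`, where `S j = C j ∩ ⋃_{k < j} C k` (so `R 0 = C 0`)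
    (R : Fin m → Finset (Fin n))
    (hR : ∀ j : Fin m, R j = C j \ ((Finset.univ.filter (fun k => k < j)).biUnion C))
    -- probability potentials
    (Φ : Fin m → (∀ i, α i) → ℝ)
    (hΦmeas : ∀ j, Measurable (Φ j))
    (hΦnonneg : ∀ j y, 0 ≤ Φ j y)
    (hΦbdd : ∀ j, ∃ M, ∀ y, |Φ j y| ≤ M)
    (hΦdep : ∀ (j : Fin m) (y y' : ∀ i, α i),
      (∀ i ∈ C j, y i = y' i) → Φ j y = Φ j y')
    -- utility potentials
    (K : Type) [Fintype K] (w : K → ℝ)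
    (Ψ : Fin m → K → (∀ i, α i) → ℝ)
    (hΨmeas : ∀ j c, Measurable (Ψ j c))
    (hΨbdd : ∀ j c, ∃ M, ∀ y, |Ψ j c y| ≤ M)
    (hΨdep : ∀ (j : Fin m) (c : K) (y y' : ∀ i, α i),
      (∀ i ∈ C j, y i = y' i) → Ψ j c y = Ψ j c y')
    -- the absorption recursion: `Θ t` is the family after absorbing the cliques
    -- `m - 1, …, t` (in decreasing order) into their parents
    (Θ : ℕ → Fin m → K → (∀ i, α i) → ℝ)
    (hΘtop : ∀ (j : Fin m) (c : K) (y : ∀ i, α i), Θ m j c y = Ψ j c y)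
    (hΘstep : ∀ (t : ℕ) (ht1 : 1 ≤ t) (htm : t < m) (j' : Fin m) (c : K) (y : ∀ i, α i),
      Θ t j' c y =
        if j' = ι ⟨t, htm⟩ then
          Θ (t + 1) j' c y *
            partialIntegral μ (R ⟨t, htm⟩)
              (fun y' => Φ ⟨t, htm⟩ y' * Θ (t + 1) ⟨t, htm⟩ c y') y
        else Θ (t + 1) j' c y) :
    ∀ y : ∀ i, α i,
      ∑ c : K, w c *
          partialIntegral μ (C (0 : Fin m))
            (fun y' => Φ (0 : Fin m) y' * Θ 1 (0 : Fin m) c y') y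
        = ∫ y', (∏ j, Φ j y') * (∑ c : K, w c * ∏ j, Ψ j c y') ∂(Measure.pi μ) := by
  classical
  intro y₀
  have hm1 : 1 ≤ m := Nat.one_le_iff_ne_zero.mpr (NeZero.ne m)
  set filt : ℕ → Finset (Fin m) := fun t => Finset.univ.filter (fun j => (j : ℕ) < t) with hfilt_def
  set F : ℕ → Finset (Fin n) := fun t => (filt t).biUnion C with hF_def
  set G : ℕ → K → (∀ i, α i) → ℝ :=
    fun t c y => (∏ j ∈ filt t, Φ j y) * ∏ j ∈ filt t, Θ t j c y with hG_def
  -- coordinates of cliques listed before time t are inside `F t`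
  have hCF : ∀ (t : ℕ) (j : Fin m), (j : ℕ) < t → C j ⊆ F t := by
    intro t j hj
    exact Finset.subset_biUnion_of_mem C (by simp [hfilt_def, hj])
  have key : ∀ s : ℕ, s ≤ m - 1 →
      (∀ (j : Fin m) (c : K), Measurable (Θ (m - s) j c) ∧
          (∃ M, ∀ y, |Θ (m - s) j c y| ≤ M) ∧ DepsOn (Θ (m - s) j c) (C j))
      ∧ (∀ y : ∀ i, α i,
          ∑ c : K, w c * partialIntegral μ (F (m - s)) (G (m - s) c) y
            = ∫ y', (∏ j, Φ j y') * (∑ c : K, w c * ∏ j, Ψ j c y') ∂(Measure.pi μ)) := by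
    intro s
    induction s with
    | zero =>
      intro _
      simp only [Nat.sub_zero]
      have hΘm : ∀ j c, Θ m j c = Ψ j c := fun j c => funext fun y => hΘtop j c y
      constructor
      · intro j c
        rw [hΘm]
        exact ⟨hΨmeas j c, hΨbdd j c, fun y y' h => hΨdep j c y y' h⟩
      · intro y
        have hfiltm : filt m = Finset.univ := by
          ext j; simp [hfilt_def, j.isLt]
        have hFm : F m = Finset.univ := by
          ext i
          simp only [hF_def, Finset.mem_biUnion, Finset.mem_univ, iff_true, hfiltm]
          obtain ⟨j, hj⟩ := hcover i
          exact ⟨j, by simp, hj⟩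
        have hGm : ∀ c, G m c = fun y' => (∏ j, Φ j y') * ∏ j, Ψ j c y' := by
          intro c; funext y'
          simp [hG_def, hfiltm, hΘm]
        have hint : ∀ c : K, Integrable
            (fun y' => w c * ((∏ j, Φ j y') * ∏ j, Ψ j c y')) (Measure.pi μ) := by
          intro c
          have hmeas : Measurable fun y' => w c * ((∏ j, Φ j y') * ∏ j, Ψ j c y') :=
            ((Finset.measurable_prod _ fun j _ => hΦmeas j).mul
              (Finset.measurable_prod _ fun j _ => hΨmeas j c)).const_mul _
          obtain ⟨M, hM⟩ := exists_bound_mul (f := fun _ : ∀ i, α i => w c)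
            (⟨|w c|, fun _ => le_rfl⟩)
            (exists_bound_mul (exists_bound_finset_prod _ _ fun j _ => hΦbdd j)
              (exists_bound_finset_prod _ _ fun j _ => hΨbdd j c))
          exact integrable_of_bounded' _ hmeas hM
        calc ∑ c : K, w c * partialIntegral μ (F m) (G m c) y
            = ∑ c : K, ∫ y', w c * ((∏ j, Φ j y') * ∏ j, Ψ j c y') ∂(Measure.pi μ) := by
              refine Finset.sum_congr rfl fun c _ => ?_
              rw [hFm, hGm, partialIntegral_univ, ← integral_const_mul]
          _ = ∫ y', ∑ c : K, w c * ((∏ j, Φ j y') * ∏ j, Ψ j c y') ∂(Measure.pi μ) :=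
              (integral_finset_sum _ fun c _ => hint c).symm
          _ = ∫ y', (∏ j, Φ j y') * (∑ c : K, w c * ∏ j, Ψ j c y') ∂(Measure.pi μ) := by
              congr 1; funext y'
              rw [Finset.mul_sum]
              exact Finset.sum_congr rfl fun c _ => by ring
    | succ s ih =>
      intro hs
      obtain ⟨ihQ, ihP⟩ := ih (by omega)
      obtain ⟨t, ht⟩ : ∃ t, m - (s + 1) = t := ⟨_, rfl⟩
      have ht1 : 1 ≤ t := by omega
      have htm : t < m := by omega
      have hts : m - s = t + 1 := by omega
      rw [ht]
      rw [hts] at ihQ ihP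
      set τ : Fin m := ⟨t, htm⟩ with hτ_def
      have hτ0 : τ ≠ 0 := by
        intro h
        have := congrArg Fin.val h
        simp [hτ_def] at this
        omega
      -- the absorbed message
      set B : K → (∀ i, α i) → ℝ := fun c y' => Φ τ y' * Θ (t + 1) τ c y' with hB_def
      have hBmeas : ∀ c, Measurable (B c) := fun c => (hΦmeas τ).mul (ihQ τ c).1
      have hBbdd : ∀ c, ∃ M, ∀ y, |B c y| ≤ M :=
        fun c => exists_bound_mul (hΦbdd τ) (ihQ τ c).2.1
      have hBdep : ∀ c, DepsOn (B c) (C τ) :=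
        fun c => DepsOn.mul (hΦdep τ) (ihQ τ c).2.2
      have hPIBmeas : ∀ c, Measurable (partialIntegral μ (R τ) (B c)) :=
        fun c => measurable_partialIntegral μ (hBmeas c)
      have hPIBbdd : ∀ c, ∃ M, ∀ y, |partialIntegral μ (R τ) (B c) y| ≤ M := by
        intro c
        obtain ⟨M, hM⟩ := hBbdd c
        exact ⟨_, abs_partialIntegral_le μ hM⟩
      have hsub : C τ \ R τ ⊆ C (ι τ) := by
        intro i hi
        rw [Finset.mem_sdiff, hR τ] at hi
        obtain ⟨hi1, hi2⟩ := hi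
        have : i ∈ (Finset.univ.filter (fun k => k < τ)).biUnion C := by
          by_contra h
          exact hi2 (Finset.mem_sdiff.mpr ⟨hi1, h⟩)
        rw [Finset.mem_biUnion] at this
        obtain ⟨k, hk, hik⟩ := this
        exact hrip τ hτ0 i hi1 ⟨k, (Finset.mem_filter.mp hk).2, hik⟩
      have hPIBdep : ∀ c, DepsOn (partialIntegral μ (R τ) (B c)) (C (ι τ)) :=
        fun c => ((hBdep c).partialIntegral μ (R τ)).mono hsub
      -- the recursion step as a function equality
      have hstep : ∀ (j : Fin m) (c : K), Θ t j c =
          if j = ι τ then fun y => Θ (t + 1) j c y * partialIntegral μ (R τ) (B c) y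
          else Θ (t + 1) j c := by
        intro j c
        by_cases hj : j = ι τ
        · rw [if_pos hj]; funext y; rw [hΘstep t ht1 htm j c y, if_pos hj]
        · rw [if_neg hj]; funext y; rw [hΘstep t ht1 htm j c y, if_neg hj]
      have hQ : ∀ (j : Fin m) (c : K), Measurable (Θ t j c) ∧
          (∃ M, ∀ y, |Θ t j c y| ≤ M) ∧ DepsOn (Θ t j c) (C j) := by
        intro j c
        rw [hstep j c]
        by_cases hj : j = ι τ
        · rw [if_pos hj, hj]
          exact ⟨(ihQ (ι τ) c).1.mul (hPIBmeas c),
            exists_bound_mul (ihQ (ι τ) c).2.1 (hPIBbdd c),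
            DepsOn.mul (ihQ (ι τ) c).2.2 (hPIBdep c)⟩
        · rw [if_neg hj]
          exact ihQ j c
      refine ⟨hQ, ?_⟩
      intro y
      -- finset combinatorics
      have hτnot : τ ∉ filt t := by simp [hfilt_def, hτ_def]
      have hfiltsucc : filt (t + 1) = insert τ (filt t) := by
        ext j
        simp only [hfilt_def, Finset.mem_filter, Finset.mem_univ, true_and,
          Finset.mem_insert, Fin.ext_iff, hτ_def]
        omega
      have hbi : (Finset.univ.filter (fun k => k < τ)).biUnion C = F t := by
        have : Finset.univ.filter (fun k => k < τ) = filt t := by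
          ext k; simp [hfilt_def, Fin.lt_def, hτ_def]
        rw [this, hF_def]
      have hRτ : R τ = C τ \ F t := by rw [hR τ, hbi]
      have hdisj : Disjoint (F t) (R τ) := by
        rw [hRτ]; exact Finset.disjoint_sdiff
      have hFR : F (t + 1) = F t ∪ R τ := by
        ext i
        simp only [hF_def, Finset.mem_biUnion, hfiltsucc, Finset.mem_insert,
          Finset.mem_union, hRτ, Finset.mem_sdiff]
        constructor
        · rintro ⟨j, hj | hj, hij⟩
          · subst hj
            by_cases h : ∃ k ∈ filt t, i ∈ C k
            · exact Or.inl h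
            · exact Or.inr ⟨hij, h⟩
          · exact Or.inl ⟨j, hj, hij⟩
        · rintro (⟨j, hj, hij⟩ | ⟨h1, -⟩)
          · exact ⟨j, Or.inr hj, hij⟩
          · exact ⟨τ, Or.inl rfl, h1⟩
      -- G (t+1) is measurable and bounded
      have hGmeas : ∀ c, Measurable (G (t + 1) c) := by
        intro c
        exact (Finset.measurable_prod _ fun j _ => hΦmeas j).mul
          (Finset.measurable_prod _ fun j _ => (ihQ j c).1)
      have hGbdd : ∀ c, ∃ M, ∀ y, |G (t + 1) c y| ≤ M := by
        intro c
        exact exists_bound_mul (exists_bound_finset_prod _ _ fun j _ => hΦbdd j)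
          (exists_bound_finset_prod _ _ fun j _ => (ihQ j c).2.1)
      -- the inner integration over the residual coordinates
      have hιτmem : ι τ ∈ filt t := by
        have := hι τ hτ0
        simp only [hfilt_def, Finset.mem_filter, Finset.mem_univ, true_and]
        exact Fin.lt_def.mp this
      have hinner : ∀ (c : K) (z : ∀ i, α i),
          partialIntegral μ (R τ) (G (t + 1) c) z = G t c z := by
        intro c z
        set A : (∀ i, α i) → ℝ :=
          fun y' => (∏ j ∈ filt t, Φ j y') * ∏ j ∈ filt t, Θ (t + 1) j c y' with hA_def
        have hsplit : G (t + 1) c = fun y' => A y' * B c y' := by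
          funext y'
          simp only [hG_def, hA_def, hB_def, hfiltsucc, Finset.prod_insert hτnot]
          ring
        have hAdep : DepsOn A (F t) := by
          refine DepsOn.mul ?_ ?_
          · exact depsOn_finset_prod _ _ fun j hj => DepsOn.mono (hΦdep j)
              (hCF t j (by simpa [hfilt_def] using hj))
          · exact depsOn_finset_prod _ _ fun j hj => DepsOn.mono ((ihQ j c).2.2)
              (hCF t j (by simpa [hfilt_def] using hj))
        have hApull : ∀ (x : ∀ i : {i // i ∈ R τ}, α i.val) (y : ∀ i, α i),
            A (Function.updateFinset y (R τ) x) = A y :=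
          fun x y => hAdep.updateFinset_eq hdisj x y
        rw [hsplit, partialIntegral_mul_left μ hApull z]
        -- now compute `G t c z`
        have hprod : ∏ j ∈ filt t, Θ t j c z =
            partialIntegral μ (R τ) (B c) z * ∏ j ∈ filt t, Θ (t + 1) j c z := by
          rw [← Finset.mul_prod_erase _ (fun j => Θ t j c z) hιτmem,
            ← Finset.mul_prod_erase _ (fun j => Θ (t + 1) j c z) hιτmem]
          have h1 : Θ t (ι τ) c z = Θ (t + 1) (ι τ) c z * partialIntegral μ (R τ) (B c) z := by
            rw [hstep (ι τ) c, if_pos rfl]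
          have h2 : ∏ j ∈ (filt t).erase (ι τ), Θ t j c z =
              ∏ j ∈ (filt t).erase (ι τ), Θ (t + 1) j c z := by
            refine Finset.prod_congr rfl fun j hj => ?_
            rw [hstep j c, if_neg (Finset.ne_of_mem_erase hj)]
          rw [h1, h2]; ring
        simp only [hG_def, hA_def, hprod]
        ring
      -- outer step
      have houter : ∀ c : K,
          partialIntegral μ (F (t + 1)) (G (t + 1) c) y
            = partialIntegral μ (F t) (G t c) y := by
        intro c
        obtain ⟨M, hM⟩ := hGbdd c
        rw [hFR, partialIntegral_union μ hdisj (hGmeas c) hM y]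
        congr 1
        funext z
        exact hinner c z
      calc ∑ c : K, w c * partialIntegral μ (F t) (G t c) y
          = ∑ c : K, w c * partialIntegral μ (F (t + 1)) (G (t + 1) c) y :=
            Finset.sum_congr rfl fun c _ => by rw [houter c]
        _ = ∫ y', (∏ j, Φ j y') * (∑ c : K, w c * ∏ j, Ψ j c y') ∂(Measure.pi μ) := ihP y
  -- conclude at `t = 1`
  obtain ⟨-, hP⟩ := key (m - 1) le_rfl
  have h1 : m - (m - 1) = 1 := by omega
  rw [h1] at hP
  have hfilt1 : filt 1 = {(0 : Fin m)} := by
    ext j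
    simp only [hfilt_def, Finset.mem_filter, Finset.mem_univ, true_and,
      Finset.mem_singleton, Fin.ext_iff, Fin.val_zero]
    omega
  have hF1 : F 1 = C 0 := by rw [hF_def]; simp [hfilt1]
  have hG1 : ∀ c, G 1 c = fun y' => Φ 0 y' * Θ 1 0 c y' := by
    intro c; funext y'
    simp [hG_def, hfilt1]
  calc ∑ c : K, w c * partialIntegral μ (C (0 : Fin m))
        (fun y' => Φ (0 : Fin m) y' * Θ 1 (0 : Fin m) c y') y₀
      = ∑ c : K, w c * partialIntegral μ (F 1) (G 1 c) y₀ := by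
        refine Finset.sum_congr rfl fun c _ => ?_
        rw [hF1, hG1]
    _ = ∫ y', (∏ j, Φ j y') * (∑ c : K, w c * ∏ j, Ψ j c y') ∂(Measure.pi μ) := hP y₀
end

section
/- Let E ⊆ Fin n × Fin n be increasing, i.e. (i,j) ∈ E implies i < j (so (Fin n, E) is a DAG; this covers the union of the probabilistic edges with the added edges B₁ joining vertices linked by a utility edge). Let E' be the smallest edge set containing E that is closed under the rule: if (i,k) ∈ E' and (j,k) ∈ E' and i < j then (i,j) ∈ E' (equivalently, E' is the intersection of all supersets of E closed under this rule). Then E' is still increasing — hence (Fin n, E') is a DAG — and (Fin n, E') is decomposable: any two distinct parents of a common child are joined by an edge. -/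
/-- The closure `E'` of an increasing edge set `E` under the rule
"two distinct parents of a common child get joined" (the intersection of all
supersets of `E` closed under this rule) is still increasing — hence a DAG —
and decomposable: any two distinct parents of a common child are joined. -/
theorem decomposable_closure {n : ℕ} (E : Set (Fin n × Fin n))
    (hE : ∀ p ∈ E, p.1 < p.2) :
    let E' : Set (Fin n × Fin n) :=
      ⋂₀ {S | E ⊆ S ∧
        ∀ i j k : Fin n, (i, k) ∈ S → (j, k) ∈ S → i < j → (i, j) ∈ S}
    (∀ p ∈ E', p.1 < p.2) ∧
    (∀ k i j : Fin n, (i, k) ∈ E' → (j, k) ∈ E' → i ≠ j →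
      ((i, j) ∈ E' ∨ (j, i) ∈ E')) := by
  intro E'
  have hmem : E' ∈ {S | E ⊆ S ∧
      ∀ i j k : Fin n, (i, k) ∈ S → (j, k) ∈ S → i < j → (i, j) ∈ S} := by
    constructor
    · intro p hp S hS
      exact hS.1 hp
    · intro i j k hik hjk hij S hS
      exact hS.2 i j k (hik S hS) (hjk S hS) hij
  constructor
  · intro p hp
    exact hp {q | q.1 < q.2} ⟨hE, fun i j k _ _ h => h⟩
  · intro k i j hik hjk hne
    rcases lt_or_gt_of_ne hne with h | h
    · exact Or.inl (hmem.2 i j k hik hjk h)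
    · exact Or.inr (hmem.2 j i k hjk hik h)
end

section
/- For every v : V, the cliques containing v form a subtree of the junction tree: for all j j' : Fin m with v ∈ C j and v ∈ C j', every vertex k on the unique undirected path between j and j' in the junction tree satisfies v ∈ C k. Equivalently, for every j ≠ 0 with v ∈ C j and v ∈ C k for some k < j, one has v ∈ C (ι j). -/
/-- On any (simple) path in the junction tree, every vertex on the path is
bounded by the maximum of the endpoints. -/
lemma jt_max_bound {m : ℕ} [NeZero m] (ι : Fin m → Fin m)
    (hι : ∀ j : Fin m, j ≠ 0 → ι j < j) :
    ∀ (j j' : Fin m)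
      (p : (SimpleGraph.fromRel (fun i j => j ≠ 0 ∧ i = ι j)).Walk j j'),
      p.IsPath → ∀ k ∈ p.support, k ≤ max j j' := by
  intro j j' p
  induction p with
  | nil =>
    intro _ k hk
    simp only [SimpleGraph.Walk.support_nil, List.mem_singleton] at hk
    subst hk; exact le_max_left _ _
  | @cons a b c h q ih =>
    intro hp k hk
    rw [SimpleGraph.Walk.cons_isPath_iff] at hp
    obtain ⟨hq, ha⟩ := hp
    have hb : b ≤ max a c := by
      rw [SimpleGraph.fromRel_adj] at h
      obtain ⟨hne, h | h⟩ := h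
      · -- a = ι b, so a < b; show b ≤ c
        have hab : a < b := by
          have := hι b h.1
          rw [← h.2] at this; exact this
        cases q with
        | nil => exact le_max_right _ _
        | @cons _ d _ h' q' =>
          have hd : d ∈ (SimpleGraph.Walk.cons h' q').support := by
            simp [SimpleGraph.Walk.support_cons]
          have h'' := h'
          rw [SimpleGraph.fromRel_adj] at h''
          obtain ⟨hne', h'' | h''⟩ := h''
          · -- b = ι d, so b < d, and d ≤ max b c by ih, so b < c
            have hbd : b < d := by
              have := hι d h''.1
              rw [← h''.2] at this; exact this
            have := ih hq d hd
            have hdc : d ≤ c := by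
              rcases max_cases b c with ⟨he, _⟩ | ⟨he, _⟩
              · rw [he] at this; exact absurd this (not_le.mpr hbd)
              · rw [he] at this; exact this
            exact le_trans (le_of_lt (lt_of_lt_of_le hbd hdc)) (le_max_right _ _)
          · -- d = ι b, but then d = a which is not on q
            have hda : d = a := by rw [h''.2, ← h.2]
            exfalso
            apply ha
            rw [← hda]
            simp [SimpleGraph.Walk.support_cons]
      · -- b = ι a, so b < a
        have : b < a := by
          have := hι a h.1
          rw [← h.2] at this; exact this
        exact le_trans (le_of_lt this) (le_max_left _ _)
    simp only [SimpleGraph.Walk.support_cons, List.mem_cons] at hk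
    rcases hk with rfl | hk
    · exact le_max_left _ _
    · exact le_trans (ih hq k hk) (max_le hb (le_max_right _ _))

/-- Main auxiliary lemma, by strong induction on path length, assuming the
endpoints are ordered. -/
lemma jt_aux {V : Type*} {m : ℕ} [NeZero m]
    (C : Fin m → Finset V) (ι : Fin m → Fin m)
    (hι : ∀ j : Fin m, j ≠ 0 → ι j < j)
    (hrip : ∀ j : Fin m, j ≠ 0 → ∀ v ∈ C j, (∃ k, k < j ∧ v ∈ C k) → v ∈ C (ι j))
    (v : V) :
    ∀ n : ℕ, ∀ j j' : Fin m,
      ∀ p : (SimpleGraph.fromRel (fun i j => j ≠ 0 ∧ i = ι j)).Walk j j',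
      p.length = n → p.IsPath → v ∈ C j → v ∈ C j' → j' ≤ j →
      ∀ k ∈ p.support, v ∈ C k := by
  intro n
  induction n using Nat.strong_induction_on with
  | _ n ih =>
    intro j j' p hlen hp hvj hvj' hle k hk
    cases p with
    | nil =>
      simp only [SimpleGraph.Walk.support_nil, List.mem_singleton] at hk
      subst hk; exact hvj
    | @cons _ b _ h q =>
      have hmax := jt_max_bound ι hι _ _ _ hp
      rw [SimpleGraph.Walk.cons_isPath_iff] at hp
      obtain ⟨hq, hjq⟩ := hp
      have hj' : j' ≠ j := by
        intro he
        exact hjq (he ▸ q.end_mem_support)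
      have hlt : j' < j := lt_of_le_of_ne hle hj'
      have hj0 : j ≠ 0 := by
        rintro rfl
        exact absurd hlt (by simp)
      -- identify b = ι j
      have hb : b = ι j := by
        rw [SimpleGraph.fromRel_adj] at h
        obtain ⟨hne, h | h⟩ := h
        · -- j = ι b, so j < b; contradiction with max bound
          exfalso
          have hjb : j < b := by
            have := hι b h.1
            rw [← h.2] at this; exact this
          have := hmax b (by simp [SimpleGraph.Walk.support_cons])
          rw [max_eq_left hle] at this
          exact absurd this (not_le.mpr hjb)
        · exact h.2
      have hvb : v ∈ C b := by
        rw [hb]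
        exact hrip j hj0 v hvj ⟨j', hlt, hvj'⟩
      simp only [SimpleGraph.Walk.support_cons, List.mem_cons] at hk
      rcases hk with rfl | hk
      · exact hvj
      · have hlen' : q.length < n := by
          rw [← hlen]; simp [SimpleGraph.Walk.length_cons]
        rcases le_total j' b with hle' | hle'
        · exact ih q.length hlen' b j' q rfl hq hvb hvj' hle' k hk
        · refine ih q.reverse.length (by rwa [SimpleGraph.Walk.length_reverse])
            j' b q.reverse rfl (hq.reverse) hvj' hvb hle' k ?_
          rwa [SimpleGraph.Walk.support_reverse, List.mem_reverse]

/-- In a junction tree (cliques `C j` with parent map `ι` satisfying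
the running intersection property), the cliques containing any fixed vertex `v`
form a subtree: every clique on the (unique) undirected path between two cliques
containing `v` also contains `v`. Equivalently, for every `j ≠ 0` with `v ∈ C j`
and `v ∈ C k` for some `k < j`, one has `v ∈ C (ι j)`. -/
theorem junction_tree_subtree_property {V : Type*} {m : ℕ} [NeZero m]
    (C : Fin m → Finset V) (ι : Fin m → Fin m)
    (hι : ∀ j : Fin m, j ≠ 0 → ι j < j)
    -- running intersection property
    (hrip : ∀ j : Fin m, j ≠ 0 → ∀ v ∈ C j, (∃ k, k < j ∧ v ∈ C k) → v ∈ C (ι j)) :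
    -- the junction tree, with an (undirected) edge between `ι j` and `j` for `j ≠ 0`
    let G : SimpleGraph (Fin m) := SimpleGraph.fromRel (fun i j => j ≠ 0 ∧ i = ι j)
    ∀ v : V,
      (∀ j j' : Fin m, v ∈ C j → v ∈ C j' →
        ∀ p : G.Walk j j', p.IsPath → ∀ k ∈ p.support, v ∈ C k) ∧
      (∀ j : Fin m, j ≠ 0 → v ∈ C j → (∃ k, k < j ∧ v ∈ C k) → v ∈ C (ι j)) := by
  intro G v
  refine ⟨?_, fun j hj hv hex => hrip j hj v hv hex⟩
  intro j j' hvj hvj' p hp k hk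
  rcases le_total j' j with hle | hle
  · exact jt_aux C ι hι hrip v p.length j j' p rfl hp hvj hvj' hle k hk
  · refine jt_aux C ι hι hrip v p.reverse.length j' j p.reverse rfl (SimpleGraph.Walk.IsPath.reverse hp)
      hvj' hvj hle k ?_
    rwa [SimpleGraph.Walk.support_reverse, List.mem_reverse]
end

section
/- Let l : Fin m with l ≠ 0 be a leaf of the junction tree, i.e. there is no j with ι j = l. Then the residual C l \ C (ι l) is disjoint from every other clique: for every v ∈ C l with v ∉ C (ι l), and every j ≠ l, one has v ∉ C j. -/
/-- In a junction tree (cliques `C j` with parent map `ι` satisfying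
the running intersection property), if `l ≠ 0` is a leaf (no clique has `l` as its
parent), then the residual `C l \ C (ι l)` is disjoint from every other clique. -/
theorem junction_tree_leaf_residual_disjoint {V : Type*} {m : ℕ} [NeZero m]
    (C : Fin m → Finset V) (ι : Fin m → Fin m)
    (hι : ∀ j : Fin m, j ≠ 0 → ι j < j)
    -- running intersection property
    (hrip : ∀ j : Fin m, j ≠ 0 → ∀ v ∈ C j, (∃ k, k < j ∧ v ∈ C k) → v ∈ C (ι j))
    (l : Fin m) (hl0 : l ≠ 0)
    (hleaf : ∀ j : Fin m, j ≠ 0 → ι j ≠ l) :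
    ∀ v ∈ C l, v ∉ C (ι l) → ∀ j : Fin m, j ≠ l → v ∉ C j := by
  intro v hvl hvpl j hjl hvj
  have hlow : ∀ k : Fin m, k < l → v ∉ C k := fun k hk hvk =>
    hvpl (hrip l hl0 v hvl ⟨k, hk, hvk⟩)
  have key : ∀ n : ℕ, ∀ j : Fin m, j.val = n → j ≠ l → v ∈ C j → False := by
    intro n
    induction n using Nat.strong_induction_on with
    | _ n ih =>
      intro j hjn hjl hvj
      rcases lt_trichotomy j l with h | h | h
      · exact hlow j h hvj
      · exact hjl h
      · have hj0 : j ≠ 0 := by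
          intro h0
          rw [h0] at h
          simp [Fin.lt_def] at h
        have hvι : v ∈ C (ι j) := hrip j hj0 v hvj ⟨l, h, hvl⟩
        exact ih (ι j).val (hjn ▸ (hι j hj0)) (ι j) rfl (hleaf j hj0) hvι
  exact key j.val j rfl hjl hvj
end
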